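/- arXiv:2206.05392 — 6 statements merged into one kernel-verified Lean document; each statement's English description precedes it below -/
import Mathlib

section
/- Let f ∈ ℚ[x_0,x_1,…,x_N] be homogeneous of degree n > 0 and let 0 ≤ i ≤ N. If the polynomial f|_{x_i=0}, obtained from f by substituting x_i = 0, is irreducible in the polynomial ring ℚ[x_0,…,x̂_i,…,x_N] in the remaining N variables (x_i omitted), then f is irreducible in ℚ[x_0,x_1,…,x_N]. -/
/-!
In a polynomial ring over a domain, both the total degree and the lowest degree of a monomial
(the order of the polynomial as a power series) are additive under multiplication. For a
nonzero homogeneous product the two agree, so they agree for each factor: divisors of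
homogeneous polynomials are homogeneous. Substituting `x_i = 0` maps a homogeneous polynomial
of degree `m` to one of degree `m`, which cannot be a unit unless `m = 0`; hence a
factorisation of `f` into two non-units would give one of `f|_{x_i=0}`.
-/

open MvPolynomial

namespace MvPolynomial

variable {σ R : Type*}

theorem IsHomogeneous.le_order_coe [CommSemiring R] {p : MvPolynomial σ R} {n : ℕ}
    (hp : p.IsHomogeneous n) : (n : ℕ∞) ≤ (p : MvPowerSeries σ R).order :=
  MvPowerSeries.nat_le_order fun d hd => by
    rw [coeff_coe]
    exact hp.coeff_eq_zero hd.ne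

theorem order_coe_le_totalDegree [CommSemiring R] {p : MvPolynomial σ R} (hp : p ≠ 0) :
    (p : MvPowerSeries σ R).order ≤ p.totalDegree := by
  obtain ⟨d, hd⟩ := support_nonempty.2 hp
  calc (p : MvPowerSeries σ R).order ≤ d.degree :=
        MvPowerSeries.order_le (by rwa [coeff_coe, ← mem_support_iff])
    _ ≤ p.totalDegree := by exact_mod_cast le_totalDegree hd

theorem isHomogeneous_totalDegree_of_totalDegree_le_order [CommSemiring R]
    {p : MvPolynomial σ R} (h : (p.totalDegree : ℕ∞) ≤ (p : MvPowerSeries σ R).order) :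
    p.IsHomogeneous p.totalDegree := fun {d} hd => by
  rw [Pi.one_def, ← Finsupp.degree_eq_weight_one]
  refine le_antisymm (le_totalDegree (mem_support_iff.2 hd)) ?_
  exact_mod_cast h.trans (MvPowerSeries.order_le (by rwa [coeff_coe]))

theorem IsHomogeneous.of_dvd [CommRing R] [IsDomain R] {p q : MvPolynomial σ R} {n : ℕ}
    (hp : p.IsHomogeneous n) (hp0 : p ≠ 0) (hqp : q ∣ p) : q.IsHomogeneous q.totalDegree := by
  obtain ⟨r, rfl⟩ := hqp
  obtain ⟨hq0, hr0⟩ := mul_ne_zero_iff.1 hp0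
  refine isHomogeneous_totalDegree_of_totalDegree_le_order ?_
  have hsum : ((q.totalDegree + r.totalDegree : ℕ) : ℕ∞) ≤
      (q : MvPowerSeries σ R).order + (r : MvPowerSeries σ R).order := by
    rw [← totalDegree_mul_of_isDomain hq0 hr0, hp.totalDegree hp0, ← MvPowerSeries.order_mul,
      ← coe_mul]
    exact hp.le_order_coe
  rw [Nat.cast_add] at hsum
  exact (ENat.add_le_add_iff_right (ENat.natCast_ne_top _)).1
    (hsum.trans (add_le_add_right (order_coe_le_totalDegree hr0) _))

theorem IsHomogeneous.isUnit_of_isUnit_aeval {τ K : Type*} [Field K] {c : MvPolynomial σ K}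
    {m n : ℕ} (hc : c.IsHomogeneous m) {g : σ → MvPolynomial τ K}
    (hg : ∀ j, (g j).IsHomogeneous n) (hn : 0 < n) (hu : IsUnit (MvPolynomial.aeval g c)) : IsUnit c := by
  have hc0 : c ≠ 0 := by
    rintro rfl
    simp at hu
  have hm : m = 0 := by
    have hdeg := (hc.aeval g hg).totalDegree hu.ne_zero
    rw [(isUnit_iff_totalDegree_of_isReduced.1 hu).2] at hdeg
    exact (Nat.mul_eq_zero.1 hdeg.symm).resolve_left hn.ne'
  have hcC : c = C (coeff 0 c) := totalDegree_eq_zero_iff_eq_C.1 (hm ▸ hc.totalDegree hc0)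
  rw [hcC]
  exact (isUnit_iff_ne_zero.2 fun h => hc0 (by rw [hcC, h, map_zero])).map C

theorem IsHomogeneous.irreducible_of_irreducible_aeval {τ K : Type*} [Field K]
    {f : MvPolynomial σ K} {m n : ℕ} (hf : f.IsHomogeneous m) {g : σ → MvPolynomial τ K}
    (hg : ∀ j, (g j).IsHomogeneous n) (hn : 0 < n) (hirr : Irreducible (MvPolynomial.aeval g f)) :
    Irreducible f := by
  have hf0 : f ≠ 0 := by
    rintro rfl
    simp at hirr
  refine ⟨fun hu => hirr.not_isUnit (hu.map _), fun a b hab => ?_⟩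
  subst hab
  refine (hirr.isUnit_or_isUnit (map_mul _ a b)).imp (fun ha => ?_) (fun hb => ?_)
  · exact (hf.of_dvd hf0 (dvd_mul_right a b)).isUnit_of_isUnit_aeval hg hn ha
  · exact (hf.of_dvd hf0 (dvd_mul_left b a)).isUnit_of_isUnit_aeval hg hn hb

end MvPolynomial

theorem stmt3_general {N n : ℕ} (f : MvPolynomial (Fin (N+1)) ℚ) (i : Fin (N+1))
    (hf : f.IsHomogeneous n)
    (hirr : Irreducible
      (MvPolynomial.aeval
        (fun j : Fin (N+1) =>
          if hj : j = i then (0 : MvPolynomial {j : Fin (N+1) // j ≠ i} ℚ)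
          else MvPolynomial.X ⟨j, hj⟩)
        f)) :
    Irreducible f := by
  refine hf.irreducible_of_irreducible_aeval (fun j => ?_) one_pos hirr
  split
  · exact isHomogeneous_zero _ _ _
  · exact isHomogeneous_X _ _

/-- If `f ∈ ℚ[x_0,…,x_N]` is homogeneous of degree `n > 0` and the polynomial obtained by
substituting `x_i = 0` is irreducible in the polynomial ring on the remaining variables
(indexed by `{j // j ≠ i}`), then `f` is irreducible. -/
theorem stmt3 {N n : ℕ} (f : MvPolynomial (Fin (N+1)) ℚ) (i : Fin (N+1))
    (hn : 0 < n) (hf : f.IsHomogeneous n)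
    (hirr : Irreducible
      (MvPolynomial.aeval
        (fun j : Fin (N+1) =>
          if hj : j = i then (0 : MvPolynomial {j : Fin (N+1) // j ≠ i} ℚ)
          else MvPolynomial.X ⟨j, hj⟩)
        f)) :
    Irreducible f :=
  stmt3_general f i hf hirr
end

section
/- Let G_* be a nonempty rooted graph with underlying graph G and chromatic number k, and let N ≥ M ≥ k. Then: (1) if X_G(x_1,…,x_M) is irreducible in ℚ[x_1,…,x_M], then X_{≠0}(G_*;x_0,…,x_M) is irreducible in ℚ[x_0,…,x_M]; (2) if X_G(x_1,…,x_M) is irreducible in ℚ[x_1,…,x_M], then X_G(x_1,…,x_N) is irreducible in ℚ[x_1,…,x_N]; (3) if X_{≠0}(G_*;x_0,…,x_M) is irreducible in ℚ[x_0,…,x_M], then X_{≠0}(G_*;x_0,…,x_N) is irreducible in ℚ[x_0,…,x_N]. -/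
open MvPolynomial

attribute [local instance 10] Classical.propDecidable

/-- The finset of proper colorings of `G` with color set `Fin C`. -/
noncomputable def properColorings {V : Type} [Fintype V] (G : SimpleGraph V) (C : ℕ) :
    Finset (V → Fin C) :=
  Finset.univ.filter fun κ => ∀ u w, G.Adj u w → κ u ≠ κ w

/-- Chromatic symmetric polynomial of `G` with `C` colors, one variable per color. -/
noncomputable def XG {V : Type} [Fintype V] (G : SimpleGraph V) (C : ℕ) :
    MvPolynomial (Fin C) ℚ :=
  ∑ κ ∈ properColorings G C, ∏ v : V, X (κ v)

/-- `X_{≠0}(G_*; x_0,…,x_N)`: weighted sum over proper colorings with color set `{0,…,N}`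
in which the root `r` does not get color `0`. -/
noncomputable def Xne0 {V : Type} [Fintype V] (G : SimpleGraph V) (r : V) (N : ℕ) :
    MvPolynomial (Fin (N+1)) ℚ :=
  ∑ κ ∈ (properColorings G (N+1)).filter (fun κ => κ r ≠ 0), ∏ v : V, X (κ v)

/-!
Setting the variables of the surplus colors to `0` sends the larger chromatic polynomial to the
smaller one, since exactly the colorings avoiding those colors survive. Both are homogeneous of
degree `|V|`, and a homogeneous polynomial whose image under a substitution of linear forms is
irreducible is itself irreducible: in a factorization `P = A * B`, the factor sent to a unit
has image of degree `0`, while the other factor cannot gain degree, so `A` has degree `0`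
and is a nonzero constant.
-/

namespace MvPolynomial

variable {R σ τ : Type*}

theorem totalDegree_aeval_le [CommSemiring R] {g : σ → MvPolynomial τ R}
    (hg : ∀ i, (g i).IsHomogeneous 1) (p : MvPolynomial σ R) :
    (aeval g p).totalDegree ≤ p.totalDegree := by
  conv_lhs => rw [← sum_homogeneousComponent p, map_sum]
  refine totalDegree_finsetSum_le fun m hm => ?_
  have hm : m ≤ p.totalDegree := Nat.lt_succ_iff.mp (Finset.mem_range.mp hm)
  have hc := ((homogeneousComponent_isHomogeneous m p).aeval g hg).totalDegree_le
  rw [one_mul] at hc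
  exact hc.trans hm

variable [CommRing R] [IsDomain R]

theorem isUnit_of_isUnit_aeval_of_mul_eq {g : σ → MvPolynomial τ R}
    (hg : ∀ i, (g i).IsHomogeneous 1) {P A B : MvPolynomial σ R} {n : ℕ}
    (hP : P.IsHomogeneous n) (hgP : aeval g P ≠ 0) (hAB : P = A * B)
    (hA : IsUnit (aeval g A)) : IsUnit A := by
  subst hAB
  have hgA : aeval g A ≠ 0 := hA.ne_zero
  rw [map_mul] at hgP
  have hgB : aeval g B ≠ 0 := right_ne_zero_of_mul hgP
  have hA0 : A ≠ 0 := fun h => hgA (by rw [h, map_zero])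
  have hB0 : B ≠ 0 := fun h => hgB (by rw [h, map_zero])
  have hdeg : A.totalDegree + B.totalDegree = n := by
    rw [← totalDegree_mul_of_isDomain hA0 hB0, hP.totalDegree (mul_ne_zero hA0 hB0)]
  have hnB : n ≤ B.totalDegree :=
    calc n = (aeval g A * aeval g B).totalDegree := by
          rw [← map_mul, (hP.aeval g hg).totalDegree (by rwa [map_mul]), one_mul]
      _ = (aeval g A).totalDegree + (aeval g B).totalDegree :=
          totalDegree_mul_of_isDomain hgA hgB
      _ = (aeval g B).totalDegree := by
          rw [(isUnit_iff_totalDegree_of_isReduced.mp hA).2, zero_add]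
      _ ≤ B.totalDegree := totalDegree_aeval_le hg B
  have hAC : A = C (A.coeff 0) := totalDegree_eq_zero_iff_eq_C.mp (by omega)
  rw [hAC, aeval_C] at hA
  exact hAC ▸ (isUnit_of_map_unit _ _ hA).map C

theorem IsHomogeneous.irreducible_of_irreducible_aeval_s4 {g : σ → MvPolynomial τ R}
    (hg : ∀ i, (g i).IsHomogeneous 1) {P : MvPolynomial σ R} {n : ℕ}
    (hP : P.IsHomogeneous n) (hQ : Irreducible (MvPolynomial.aeval g P)) : Irreducible P where
  not_isUnit hu := hQ.not_isUnit (hu.map (MvPolynomial.aeval g))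
  isUnit_or_isUnit {A B} hAB := by
    have hQ0 := hQ.ne_zero
    rw [hAB, map_mul] at hQ
    rcases hQ.isUnit_or_isUnit rfl with hA | hB
    · exact .inl (isUnit_of_isUnit_aeval_of_mul_eq hg hP hQ0 hAB hA)
    · exact .inr (isUnit_of_isUnit_aeval_of_mul_eq hg hP hQ0 (hAB.trans (mul_comm A B)) hB)

end MvPolynomial

section ColorSums

open Function

variable {R V α β : Type*} [Fintype V]

theorem isHomogeneous_extend_X_zero [CommSemiring R] (e : α → β) (j : β) :
    (extend e X 0 j : MvPolynomial α R).IsHomogeneous 1 := by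
  rw [extend_def]
  split
  · exact isHomogeneous_X R _
  · exact isHomogeneous_zero _ _ _

theorem isHomogeneous_sum_prod_X [CommSemiring R] (S : Finset (V → α)) :
    (∑ κ ∈ S, ∏ v, (X (κ v) : MvPolynomial α R)).IsHomogeneous (Fintype.card V) := by
  refine IsHomogeneous.sum _ _ _ fun κ _ => ?_
  simpa using IsHomogeneous.prod Finset.univ _ (fun _ => 1) fun v _ => isHomogeneous_X R (κ v)

theorem aeval_extend_sum_prod_X [CommSemiring R] {e : α → β} (he : Injective e)
    {S : Finset (V → β)} {T : Finset (V → α)} (hST : ∀ κ, κ ∈ T ↔ e ∘ κ ∈ S) :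
    aeval (extend e X 0) (∑ κ ∈ S, ∏ v, (X (κ v) : MvPolynomial β R)) =
      ∑ κ ∈ T, ∏ v, (X (κ v) : MvPolynomial α R) := by
  obtain rfl : T = S.preimage (e ∘ ·) he.comp_left.injOn := by ext κ; simp [hST]
  rw [map_sum, ← Finset.sum_preimage (e ∘ ·) S he.comp_left.injOn]
  · simp [he.extend_apply]
  · intro κ _ hκ
    obtain ⟨v, hv⟩ : ∃ v, ¬∃ i, e i = κ v := by
      by_contra! h
      choose κ' hκ' using h
      exact hκ ⟨κ', funext hκ'⟩
    rw [map_prod]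
    exact Finset.prod_eq_zero (Finset.mem_univ v) (by rw [aeval_X, extend_apply' _ _ _ hv]; rfl)

theorem irreducible_sum_prod_X_of_comp [CommRing R] [IsDomain R] {e : α → β} (he : Injective e)
    {S : Finset (V → β)} {T : Finset (V → α)} (hST : ∀ κ, κ ∈ T ↔ e ∘ κ ∈ S)
    (hT : Irreducible (∑ κ ∈ T, ∏ v, (X (κ v) : MvPolynomial α R))) :
    Irreducible (∑ κ ∈ S, ∏ v, (X (κ v) : MvPolynomial β R)) :=
  (isHomogeneous_sum_prod_X S).irreducible_of_irreducible_aeval_s4 (isHomogeneous_extend_X_zero e)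
    (by rwa [aeval_extend_sum_prod_X he hST])

end ColorSums

theorem comp_mem_properColorings_iff {V : Type} [Fintype V] {G : SimpleGraph V} {C D : ℕ}
    {e : Fin C → Fin D} (he : Function.Injective e) {κ : V → Fin C} :
    e ∘ κ ∈ properColorings G D ↔ κ ∈ properColorings G C := by
  simp [properColorings, he.ne_iff]

theorem stmt4_general {V : Type} [Fintype V] (G : SimpleGraph V) (r : V)
    (M N : ℕ) (hNM : M ≤ N) :
    (Irreducible (XG G M) → Irreducible (Xne0 G r M)) ∧
    (Irreducible (XG G M) → Irreducible (XG G N)) ∧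
    (Irreducible (Xne0 G r M) → Irreducible (Xne0 G r N)) := by
  have hcast := Fin.castLE_injective hNM
  have hcast' := Fin.castLE_injective (Nat.succ_le_succ hNM)
  refine ⟨fun h => ?_, fun h => ?_, fun h => ?_⟩
  · refine irreducible_sum_prod_X_of_comp (Fin.succ_injective M) (fun κ => ?_) h
    simp [comp_mem_properColorings_iff (Fin.succ_injective M), Fin.succ_ne_zero]
  · exact irreducible_sum_prod_X_of_comp hcast
      (fun κ => (comp_mem_properColorings_iff hcast).symm) h
  · refine irreducible_sum_prod_X_of_comp hcast' (fun κ => ?_) h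
    simp only [Finset.mem_filter, comp_mem_properColorings_iff hcast', Function.comp_apply,
      ← Fin.castLE_zero (Nat.succ_le_succ hNM), hcast'.ne_iff]

/-- Irreducibility relations for chromatic polynomials of a nonempty rooted graph `G_*`
with chromatic number `k`, for `N ≥ M ≥ k`:
(1) irreducibility of `X_G` in `M` variables gives irreducibility of `X_{≠0}(G_*)` in
`M+1` variables; (2) and (3): irreducibility is preserved when passing from `M` to `N`
variables. -/
theorem stmt4 {V : Type} [Fintype V] [Nonempty V] (G : SimpleGraph V) (r : V)
    (k M N : ℕ) (hk : G.chromaticNumber = k) (hMk : k ≤ M) (hNM : M ≤ N) :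
    (Irreducible (XG G M) → Irreducible (Xne0 G r M)) ∧
    (Irreducible (XG G M) → Irreducible (XG G N)) ∧
    (Irreducible (Xne0 G r M) → Irreducible (Xne0 G r N)) :=
  stmt4_general G r M N hNM
end

section
/- Let G be a non-empty connected finite simple graph with chromatic polynomial χ_G and chromatic number k. Let p be a prime that divides neither χ_G(k) nor the coefficient of x in χ_G, and let M = k + p. Let f ∈ ℚ[q] be the polynomial obtained from X_G(x_1,…,x_M) by setting x_1 = ⋯ = x_k = q and x_{k+1} = ⋯ = x_{k+p} = 1. Then f is irreducible in ℚ[q]. -/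
/-!
Put `f = ∑_κ q ^ #{v | κ v < k}`, the sum over proper colourings `κ` with colours
`Fin (k + p)`; it has integer coefficients. Its coefficient of `q ^ |V|` counts the colourings
by the first `k` colours, i.e. `χ(k)`, and its constant term those by the last `p` colours,
i.e. `χ(p)`. Rotating the last `p` colours is an action of `ℤ/p` that is free on colourings
using at least one of them, so `p` divides all the other coefficients. Since `m ∣ χ(m)` for
every `m` (rotate all colours), `χ(0) = 0`, hence `χ(p) ≡ p · [x]χ (mod p²)`, and Eisenstein's
criterion at `p` applies.
-/

open MvPolynomial

attribute [local instance 10] Classical.propDecidable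

/-- The number of proper colorings of `G` using `m` available colors. -/
noncomputable def ncol {V : Type} [Fintype V] (G : SimpleGraph V) (m : ℕ) : ℕ :=
  (properColorings G m).card

namespace AddAction

theorem card_dvd_card_finset_of_free {A X : Type*} [AddGroup A] [Finite A] [AddAction A X]
    (s : Finset X) (hs : ∀ (a : A) {x}, x ∈ s → a +ᵥ x ∈ s)
    (hfree : ∀ x ∈ s, ∀ a : A, a +ᵥ x = x → a = 0) :
    Nat.card A ∣ s.card := by
  let S : SubAddAction A X := ⟨s, hs⟩
  have hstab : ∀ x : S, stabilizer A x = ⊥ := fun x => by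
    ext a
    simpa [Subtype.ext_iff] using ⟨hfree x x.2 a, fun h => by simp [h]⟩
  have hcard : Nat.card S = s.card :=
    (Nat.card_coe_set_eq (s : Set X)).trans (Set.ncard_coe_finset s)
  rw [← hcard, Nat.card_congr (selfEquivOrbitsQuotientProd hstab), Nat.card_prod]
  exact dvd_mul_left _ _

end AddAction

namespace Polynomial

theorem coeff_zero_eq_zero_of_forall_dvd_eval {P : ℤ[X]}
    (h : ∀ m : ℕ, 0 < m → (m : ℤ) ∣ P.eval (m : ℤ)) : P.coeff 0 = 0 := by
  have hdvd : ∀ m : ℕ, 0 < m → (m : ℤ) ∣ P.eval 0 := fun m hm => by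
    simpa using (h m hm).sub (sub_dvd_eval_sub (m : ℤ) 0 P)
  rw [coeff_zero_eq_eval_zero]
  exact Int.eq_zero_of_dvd_of_natAbs_lt_natAbs (hdvd _ (Nat.succ_pos (P.eval 0).natAbs))
    (by rw [Int.natAbs_natCast]; exact Nat.lt_succ_self _)

theorem dvd_coeff_one_of_sq_dvd_eval {R : Type*} [CommRing R] [IsDomain R] {P : R[X]} {a : R}
    (ha : a ≠ 0) (h0 : P.coeff 0 = 0) (h : a ^ 2 ∣ P.eval a) : a ∣ P.coeff 1 := by
  obtain ⟨Q, rfl⟩ := X_dvd_iff.mpr h0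
  rw [eval_mul, eval_X, sq] at h
  have hQ : a ∣ Q.eval a := (mul_dvd_mul_iff_left ha).mp h
  rw [coeff_X_mul, coeff_zero_eq_eval_zero]
  exact (dvd_sub_right hQ).mp (by simpa using sub_dvd_eval_sub a 0 Q)

variable {R K : Type*} [CommRing R] [IsDomain R] [NormalizedGCDMonoid R] [Field K] [Algebra R K]
  [IsFractionRing R K]

theorem irreducible_map_of_eisenstein_criterion {f : R[X]} {P : Ideal R} (hP : P.IsPrime)
    (hfl : f.leadingCoeff ∉ P) (hfP : ∀ n < f.natDegree, f.coeff n ∈ P)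
    (hfd0 : 0 < f.natDegree) (h0 : f.coeff 0 ∉ P ^ 2) :
    Irreducible (f.map (algebraMap R K)) := by
  have hcoeff : ∀ n, f.coeff n = f.content * f.primPart.coeff n := fun n => by
    conv_lhs => rw [f.eq_C_content_mul_primPart]
    exact coeff_C_mul _
  have hlead : f.leadingCoeff = f.content * f.primPart.leadingCoeff := by
    rw [leadingCoeff, leadingCoeff, natDegree_primPart, hcoeff]
  have hc : f.content ∉ P := fun h => hfl (hlead ▸ P.mul_mem_right _ h)
  have hprim : Irreducible f.primPart := by
    refine irreducible_of_eisenstein_criterion hP (fun h => hfl (hlead ▸ P.mul_mem_left _ h))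
      (fun n hn => ?_) ?_ (fun h => h0 (hcoeff 0 ▸ (P ^ 2).mul_mem_left _ h))
      f.isPrimitive_primPart
    · have hn' : n < f.natDegree := by
        rw [← natDegree_primPart]; exact coe_lt_degree.mp hn
      exact (hP.mem_or_mem (hcoeff n ▸ hfP n hn')).resolve_left hc
    · rw [← natDegree_pos_iff_degree_pos, natDegree_primPart]; exact hfd0
  have hunit : IsUnit (C (algebraMap R K f.content)) := by
    refine isUnit_C.mpr (isUnit_iff_ne_zero.mpr ?_)
    rw [ne_eq, IsFractionRing.to_map_eq_zero_iff, content_eq_zero_iff]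
    rintro rfl; simp at hfd0
  rw [f.eq_C_content_mul_primPart, Polynomial.map_mul, map_C, irreducible_isUnit_mul hunit]
  exact f.isPrimitive_primPart.irreducible_iff_irreducible_map_fraction_map.mp hprim

end Polynomial

namespace Fin

variable {k p : ℕ}

def rotateHigh (a : Fin p) (c : Fin (k + p)) : Fin (k + p) :=
  finSumFinEquiv (Sum.map id (a + ·) (finSumFinEquiv.symm c))

@[simp]
theorem rotateHigh_castAdd (a : Fin p) (i : Fin k) : rotateHigh a (castAdd p i) = castAdd p i := by
  simp [rotateHigh]

@[simp]
theorem rotateHigh_natAdd (a j : Fin p) : rotateHigh a (natAdd k j) = natAdd k (a + j) := by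
  simp [rotateHigh]

@[simp]
theorem val_rotateHigh_lt_iff (a : Fin p) (c : Fin (k + p)) :
    (rotateHigh a c : ℕ) < k ↔ (c : ℕ) < k := by
  induction c using Fin.addCases <;> simp

theorem eq_zero_of_rotateHigh_eq [NeZero p] {a : Fin p} {c : Fin (k + p)} (hc : ¬ (c : ℕ) < k)
    (h : rotateHigh a c = c) : a = 0 := by
  induction c using Fin.addCases with
  | left i => simp at hc
  | right j => simpa using h

variable (k p) in
@[reducible]
def rotateHighAction [NeZero p] : AddAction (Fin p) (Fin (k + p)) where
  vadd := rotateHigh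
  zero_vadd c := by
    change rotateHigh 0 c = c
    induction c using Fin.addCases <;> simp
  add_vadd a b c := by
    change rotateHigh (a + b) c = rotateHigh a (rotateHigh b c)
    induction c using Fin.addCases <;> simp [add_assoc]

end Fin

section Colorings

variable {V : Type} [Fintype V] (G : SimpleGraph V)

theorem mem_properColorings {C : ℕ} {κ : V → Fin C} :
    κ ∈ properColorings G C ↔ ∀ u w, G.Adj u w → κ u ≠ κ w := by
  simp [properColorings]

theorem vadd_mem_properColorings {A : Type*} [AddGroup A] {C : ℕ} [AddAction A (Fin C)] (a : A)
    {κ : V → Fin C} (hκ : κ ∈ properColorings G C) : a +ᵥ κ ∈ properColorings G C := by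
  rw [mem_properColorings] at hκ ⊢
  intro u w huw h
  exact hκ u w huw (vadd_left_cancel_iff a |>.mp h)

theorem card_filter_forall_mem_range_eq_ncol {C D : ℕ} (e : Fin C ↪ Fin D) :
    ((properColorings G D).filter fun κ => ∀ v, κ v ∈ Set.range e).card = ncol G C := by
  have himage : (properColorings G D).filter (fun κ => ∀ v, κ v ∈ Set.range e) =
      (properColorings G C).image (e ∘ ·) := by
    ext κ
    simp only [Finset.mem_filter, Finset.mem_image, mem_properColorings, Set.mem_range]
    constructor
    · rintro ⟨hκ, hrange⟩
      choose κ' hκ' using hrange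
      refine ⟨κ', fun u w huw h => hκ u w huw ?_, funext hκ'⟩
      rw [← hκ' u, ← hκ' w, h]
    · rintro ⟨κ', hκ', rfl⟩
      exact ⟨fun u w huw h => hκ' u w huw (e.injective h), fun v => ⟨κ' v, rfl⟩⟩
  rw [himage, Finset.card_image_of_injective _ e.injective.comp_left, ncol]

theorem dvd_ncol [Nonempty V] {m : ℕ} (hm : 0 < m) : m ∣ ncol G m := by
  have : NeZero m := ⟨hm.ne'⟩
  simpa [ncol] using AddAction.card_dvd_card_finset_of_free (A := Fin m) (properColorings G m)
    (vadd_mem_properColorings G)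
    (fun κ _ a h => by simpa using congrFun h (Classical.arbitrary V))

noncomputable def lowCount (k : ℕ) {M : ℕ} (κ : V → Fin M) : ℕ :=
  (Finset.univ.filter fun v => (κ v : ℕ) < k).card

theorem exists_not_lt_of_lowCount_lt {k M : ℕ} {κ : V → Fin M}
    (h : lowCount k κ < Fintype.card V) : ∃ v, ¬ (κ v : ℕ) < k := by
  by_contra! hall
  simp [lowCount, Finset.filter_true_of_mem fun v _ => hall v] at h

theorem dvd_card_filter_lowCount_eq {k p j : ℕ} [NeZero p] (hj : j < Fintype.card V) :
    p ∣ ((properColorings G (k + p)).filter fun κ => lowCount k κ = j).card := by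
  let := Fin.rotateHighAction k p
  have hlowCount (a : Fin p) (κ : V → Fin (k + p)) : lowCount k (a +ᵥ κ) = lowCount k κ :=
    congrArg Finset.card <| Finset.filter_congr fun v _ => Fin.val_rotateHigh_lt_iff a (κ v)
  simpa using AddAction.card_dvd_card_finset_of_free (A := Fin p) _
    (fun a κ hκ => by
      rw [Finset.mem_filter] at hκ ⊢
      exact ⟨vadd_mem_properColorings G a hκ.1, hlowCount a κ ▸ hκ.2⟩)
    (fun κ hκ a h => by
      obtain ⟨v, hv⟩ := exists_not_lt_of_lowCount_lt ((Finset.mem_filter.mp hκ).2 ▸ hj)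
      exact Fin.eq_zero_of_rotateHigh_eq hv (congrFun h v))

end Colorings

section LowColorPoly

open Polynomial

variable {V : Type} [Fintype V] (G : SimpleGraph V) (k p : ℕ)

noncomputable def lowColorPoly : ℤ[X] :=
  ∑ κ ∈ properColorings G (k + p), Polynomial.X ^ lowCount k κ

theorem coeff_lowColorPoly (j : ℕ) :
    (lowColorPoly G k p).coeff j =
      ((properColorings G (k + p)).filter fun κ => lowCount k κ = j).card := by
  simp [lowColorPoly, finsetSum_coeff, Polynomial.coeff_X_pow, Finset.sum_boole, eq_comm]

theorem coeff_card_lowColorPoly : (lowColorPoly G k p).coeff (Fintype.card V) = ncol G k := by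
  rw [coeff_lowColorPoly,
    ← card_filter_forall_mem_range_eq_ncol G (Fin.castLEEmb (Nat.le_add_right k p))]
  congr 2
  exact Finset.filter_congr fun κ _ => by
    simp [lowCount, ← Finset.card_univ, Finset.card_filter_eq_iff, Fin.range_castLE]

theorem coeff_zero_lowColorPoly : (lowColorPoly G k p).coeff 0 = ncol G p := by
  rw [coeff_lowColorPoly, ← card_filter_forall_mem_range_eq_ncol G (Fin.natAddEmb k)]
  congr 2
  exact Finset.filter_congr fun κ _ => by
    simpa [lowCount] using
      forall_congr' fun v => (Set.ext_iff.mp (Fin.range_natAdd k p) (κ v)).symm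

theorem natDegree_lowColorPoly (h : ncol G k ≠ 0) :
    (lowColorPoly G k p).natDegree = Fintype.card V := by
  refine le_antisymm (natDegree_sum_le_of_forall_le _ _ fun κ _ => ?_)
    (le_natDegree_of_ne_zero (by simpa [coeff_card_lowColorPoly]))
  exact (natDegree_X_pow_le _).trans (Finset.card_le_univ _)

theorem dvd_coeff_lowColorPoly [NeZero p] {j : ℕ} (hj : j < Fintype.card V) :
    (p : ℤ) ∣ (lowColorPoly G k p).coeff j := by
  rw [coeff_lowColorPoly]
  exact Int.natCast_dvd_natCast.mpr (dvd_card_filter_lowCount_eq G hj)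

theorem aeval_XG_eq_map_lowColorPoly :
    MvPolynomial.aeval (fun i : Fin (k + p) => if (i : ℕ) < k then Polynomial.X else 1)
      (XG G (k + p)) = (lowColorPoly G k p).map (algebraMap ℤ ℚ) := by
  simp [XG, lowColorPoly, Finset.prod_ite, lowCount, Polynomial.map_sum]

end LowColorPoly

theorem stmt5_general {V : Type} [Fintype V] [Nonempty V] (G : SimpleGraph V)
    (χ : Polynomial ℤ) (hχ : ∀ m : ℕ, 0 < m → χ.eval (m : ℤ) = ncol G m)
    (k : ℕ) (p : ℕ) (hp : p.Prime) (hp1 : ¬ (p : ℤ) ∣ (ncol G k : ℤ)) (hp2 : ¬ (p : ℤ) ∣ χ.coeff 1) :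
    Irreducible (MvPolynomial.aeval
      (fun i : Fin (k + p) => if (i : ℕ) < k then Polynomial.X else (1 : Polynomial ℚ))
      (XG G (k + p))) := by
  have : NeZero p := ⟨hp.ne_zero⟩
  have hχ0 : χ.coeff 0 = 0 := Polynomial.coeff_zero_eq_zero_of_forall_dvd_eval fun m hm => by
    rw [hχ m hm]; exact Int.natCast_dvd_natCast.mpr (dvd_ncol G hm)
  have hdeg := natDegree_lowColorPoly G k p (by rintro h; simp [h] at hp1)
  have hP : (Ideal.span {(p : ℤ)}).IsPrime :=
    (Ideal.span_singleton_prime (by exact_mod_cast hp.ne_zero)).mpr (Nat.prime_iff_prime_int.mp hp)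
  rw [aeval_XG_eq_map_lowColorPoly]
  refine Polynomial.irreducible_map_of_eisenstein_criterion hP ?_ (fun j hj => ?_) ?_ ?_
  · rwa [Ideal.mem_span_singleton, Polynomial.leadingCoeff, hdeg, coeff_card_lowColorPoly]
  · exact Ideal.mem_span_singleton.mpr (dvd_coeff_lowColorPoly G k p (hdeg ▸ hj))
  · rw [hdeg]; exact Fintype.card_pos
  · rw [Ideal.span_singleton_pow, Ideal.mem_span_singleton, coeff_zero_lowColorPoly,
      ← hχ p hp.pos]
    exact fun h => hp2 <|
      Polynomial.dvd_coeff_one_of_sq_dvd_eval (by exact_mod_cast hp.ne_zero) hχ0 h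

/-- Let `G` be a non-empty connected graph with chromatic polynomial `χ` and chromatic
number `k`.  If `p` is a prime dividing neither `χ(k)` (the number of proper colorings
with `k` colors) nor the coefficient of `x` in `χ`, then the specialization of
`X_G(x_1,…,x_{k+p})` obtained by setting `x_1 = ⋯ = x_k = q` and
`x_{k+1} = ⋯ = x_{k+p} = 1` is irreducible in `ℚ[q]`. -/
theorem stmt5 {V : Type} [Fintype V] [Nonempty V] (G : SimpleGraph V) (hG : G.Connected)
    (χ : Polynomial ℤ) (hχ : ∀ m : ℕ, 0 < m → χ.eval (m : ℤ) = ncol G m)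
    (k : ℕ) (hkpos : 0 < k) (hk : 0 < ncol G k) (hkmin : ∀ j < k, ncol G j = 0)
    (p : ℕ) (hp : p.Prime) (hp1 : ¬ (p : ℤ) ∣ (ncol G k : ℤ)) (hp2 : ¬ (p : ℤ) ∣ χ.coeff 1) :
    Irreducible (MvPolynomial.aeval
      (fun i : Fin (k + p) => if (i : ℕ) < k then Polynomial.X else (1 : Polynomial ℚ))
      (XG G (k + p))) :=
  stmt5_general G χ hχ k p hp hp1 hp2
end

section
/- Suppose 2 ≤ k ≤ M and F ∈ ℚ[x_1,…,x_M] is a symmetric polynomial (invariant under all permutations of x_1,…,x_M) with nonnegative coefficients. Let f ∈ ℚ[q] be obtained from F by setting x_1 = ⋯ = x_k = q and x_{k+1} = ⋯ = x_M = 1. If f is irreducible in ℚ[q], then F is irreducible in ℚ[x_1,…,x_M]. -/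
open MvPolynomial

namespace Stmt6Aux

variable {M k : ℕ}

noncomputable def spec (M k : ℕ) : MvPolynomial (Fin M) ℚ →ₐ[ℚ] Polynomial ℚ :=
  aeval (fun i : Fin M => if (i : ℕ) < k then Polynomial.X else (1 : Polynomial ℚ))

noncomputable def Psi (M k : ℕ) :
    MvPolynomial (Fin M) ℚ →ₐ[ℚ] Polynomial (MvPolynomial (Fin M) ℚ) :=
  aeval (fun i : Fin M =>
    if (i : ℕ) < k then Polynomial.X * Polynomial.C (X i) else Polynomial.C (X i))

def w (k : ℕ) (m : Fin M →₀ ℕ) : ℕ := ∑ i : Fin M, if (i : ℕ) < k then m i else 0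

lemma Psi_monomial (m : Fin M →₀ ℕ) (c : ℚ) :
    Psi M k (monomial m c) = Polynomial.monomial (w k m) (monomial m c) := by
  have hmon : (monomial m c : MvPolynomial (Fin M) ℚ) = C c * ∏ i : Fin M, X i ^ m i := by
    rw [monomial_eq, Finsupp.prod_pow]
  rw [hmon, map_mul, map_prod]
  have h1 : Psi M k (C c) = Polynomial.C (C c) := by
    simp [Psi, algebraMap_eq, Polynomial.algebraMap_apply]
  have h2 : ∀ i : Fin M, Psi M k (X i ^ m i) =
      Polynomial.X ^ (if (i : ℕ) < k then m i else 0) * Polynomial.C (X i ^ m i) := by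
    intro i
    rw [map_pow]
    simp only [Psi, aeval_X]
    split_ifs with h
    · rw [mul_pow, ← Polynomial.C_pow]
    · rw [← Polynomial.C_pow, pow_zero, one_mul]
  rw [h1]
  simp only [h2]
  rw [Finset.prod_mul_distrib, Finset.prod_pow_eq_pow_sum]
  rw [← map_prod (Polynomial.C : MvPolynomial (Fin M) ℚ →+* Polynomial (MvPolynomial (Fin M) ℚ))
    (fun x : Fin M => X x ^ m x) Finset.univ]
  rw [show (∏ i : Fin M, X i ^ m i : MvPolynomial (Fin M) ℚ) = monomial m 1 by
    rw [monomial_eq, Finsupp.prod_pow, map_one, one_mul]]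
  rw [show w k m = ∑ i : Fin M, if (i : ℕ) < k then m i else 0 from rfl]
  rw [mul_comm (Polynomial.X ^ _), ← mul_assoc, ← Polynomial.C_mul,
    Polynomial.C_mul_X_pow_eq_monomial, C_mul_monomial, mul_one]

lemma Psi_coeff (A : MvPolynomial (Fin M) ℚ) (d : ℕ) (m : Fin M →₀ ℕ) :
    coeff m ((Psi M k A).coeff d) = if w k m = d then A.coeff m else 0 := by
  conv_lhs => rw [A.as_sum]
  rw [map_sum, Polynomial.finset_sum_coeff, MvPolynomial.coeff_sum]
  simp only [Psi_monomial, Polynomial.coeff_monomial, apply_ite (coeff m),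
    MvPolynomial.coeff_monomial, coeff_zero]
  rw [Finset.sum_eq_single m]
  · simp
  · intro b _ hbm
    simp [hbm]
  · intro hm
    simp only [MvPolynomial.notMem_support_iff] at hm
    simp [hm]

lemma spec_eq_map (A : MvPolynomial (Fin M) ℚ) :
    spec M k A = Polynomial.map (aeval (fun _ : Fin M => (1 : ℚ))).toRingHom (Psi M k A) := by
  have h : spec M k =
      (Polynomial.mapAlgHom (aeval (fun _ : Fin M => (1 : ℚ)))).comp (Psi M k) := by
    apply MvPolynomial.algHom_ext
    intro i
    simp only [spec, Psi, aeval_X, AlgHom.coe_comp, Function.comp_apply]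
    split_ifs with h
    · simp
    · simp
  rw [h]
  rfl

lemma w_le_natDegree {A : MvPolynomial (Fin M) ℚ} {m : Fin M →₀ ℕ} (hm : A.coeff m ≠ 0) :
    w k m ≤ (Psi M k A).natDegree := by
  apply Polynomial.le_natDegree_of_ne_zero
  intro h
  have := Psi_coeff (k := k) A (w k m) m
  rw [h] at this
  simp only [coeff_zero, if_pos rfl] at this
  exact hm this.symm

lemma degreeOf_le_natDegree_Psi (A : MvPolynomial (Fin M) ℚ) (i : Fin M) (hi : (i : ℕ) < k) :
    A.degreeOf i ≤ (Psi M k A).natDegree := by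
  rw [degreeOf_eq_sup]
  apply Finset.sup_le
  intro m hm
  rw [mem_support_iff] at hm
  have h1 : (if (i : ℕ) < k then m i else 0) ≤ w k m :=
    Finset.single_le_sum (f := fun j : Fin M => if (j : ℕ) < k then m j else 0)
      (fun j _ => by positivity) (Finset.mem_univ i)
  rw [if_pos hi] at h1
  exact h1.trans (w_le_natDegree hm)

lemma natDegree_spec_eq (F : MvPolynomial (Fin M) ℚ) (hpos : ∀ m, 0 ≤ F.coeff m)
    (hF : spec M k F ≠ 0) : (spec M k F).natDegree = (Psi M k F).natDegree := by
  rw [spec_eq_map]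
  apply Polynomial.natDegree_map_of_leadingCoeff_ne_zero
  have hPsi : Psi M k F ≠ 0 := by
    intro h
    rw [spec_eq_map, h, Polynomial.map_zero] at hF
    exact hF rfl
  set L := (Psi M k F).leadingCoeff with hL
  have hLne : L ≠ 0 := Polynomial.leadingCoeff_ne_zero.mpr hPsi
  have hLpos : ∀ m, 0 ≤ coeff m L := by
    intro m
    rw [hL, Polynomial.leadingCoeff, Psi_coeff]
    split_ifs with h
    · exact hpos m
    · exact le_refl 0
  have heval : (aeval (fun _ : Fin M => (1 : ℚ))).toRingHom L = ∑ m ∈ L.support, L.coeff m := by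
    have h1 : (aeval (fun _ : Fin M => (1 : ℚ))) L = eval (fun _ : Fin M => (1 : ℚ)) L := by
      rw [aeval_def, eval]
      simp [eval₂Hom]
    rw [AlgHom.toRingHom_eq_coe, RingHom.coe_coe, h1, eval_eq]
    apply Finset.sum_congr rfl
    intro m _
    simp
  rw [heval]
  have hpos' : 0 < ∑ m ∈ L.support, L.coeff m := by
    apply Finset.sum_pos
    · intro m hm
      rw [mem_support_iff] at hm
      exact lt_of_le_of_ne (hLpos m) (Ne.symm hm)
    · rw [Finset.nonempty_iff_ne_empty]
      intro h
      exact hLne (support_eq_empty.mp h)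
  exact ne_of_gt hpos'

lemma factor_natDegree_eq {F A B : MvPolynomial (Fin M) ℚ} (hpos : ∀ m, 0 ≤ F.coeff m)
    (hfne : spec M k F ≠ 0) (hFAB : F = A * B) :
    (spec M k A).natDegree = (Psi M k A).natDegree := by
  have hf : spec M k F = spec M k A * spec M k B := by rw [hFAB, map_mul]
  have hAne : spec M k A ≠ 0 := fun h => hfne (by rw [hf, h, zero_mul])
  have hBne : spec M k B ≠ 0 := fun h => hfne (by rw [hf, h, mul_zero])
  have hPsiA : Psi M k A ≠ 0 := fun h => hAne (by rw [spec_eq_map, h, Polynomial.map_zero])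
  have hPsiB : Psi M k B ≠ 0 := fun h => hBne (by rw [spec_eq_map, h, Polynomial.map_zero])
  have h1 : (Psi M k F).natDegree = (Psi M k A).natDegree + (Psi M k B).natDegree := by
    rw [hFAB, map_mul, Polynomial.natDegree_mul hPsiA hPsiB]
  have h2 : (spec M k F).natDegree = (spec M k A).natDegree + (spec M k B).natDegree := by
    rw [hf, Polynomial.natDegree_mul hAne hBne]
  have h3 : (spec M k F).natDegree = (Psi M k F).natDegree := natDegree_spec_eq F hpos hfne
  have h4 : (spec M k A).natDegree ≤ (Psi M k A).natDegree := by
    rw [spec_eq_map]; exact Polynomial.natDegree_map_le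
  have h5 : (spec M k B).natDegree ≤ (Psi M k B).natDegree := by
    rw [spec_eq_map]; exact Polynomial.natDegree_map_le
  omega

lemma keylemma (hk : 2 ≤ k) (hkM : k ≤ M) (F G H : MvPolynomial (Fin M) ℚ)
    (hsym : F.IsSymmetric) (hpos : ∀ m, 0 ≤ F.coeff m)
    (hirr : Irreducible (spec M k F)) (hFGH : F = G * H)
    (hGu : IsUnit (spec M k G)) : IsUnit G := by
  have hfne : spec M k F ≠ 0 := hirr.ne_zero
  have hf : spec M k F = spec M k G * spec M k H := by rw [hFGH, map_mul]
  have hGne : spec M k G ≠ 0 := fun h => hfne (by rw [hf, h, zero_mul])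
  have hEG : (spec M k G).natDegree = (Psi M k G).natDegree :=
    factor_natDegree_eq hpos hfne hFGH
  have hG0 : (Psi M k G).natDegree = 0 := by
    rw [← hEG]
    exact Polynomial.natDegree_eq_zero_of_isUnit hGu
  have hdegG : ∀ i : Fin M, (i : ℕ) < k → G.degreeOf i = 0 := by
    intro i hi
    have := degreeOf_le_natDegree_Psi (k := k) G i hi
    omega
  by_cases hcG : G.totalDegree = 0
  · have hall := (totalDegree_eq_zero_iff _ G).mp hcG
    have hGC : G = C (G.coeff 0) := by
      ext m
      rw [coeff_C]
      by_cases hm : (0 : Fin M →₀ ℕ) = m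
      · rw [if_pos hm, ← hm]
      · rw [if_neg hm]
        by_contra hne
        have hmem : m ∈ G.support := mem_support_iff.mpr hne
        apply hm
        ext x
        exact (hall m hmem x).symm
    have hGne0 : G ≠ 0 := fun h => hGne (by rw [h, map_zero])
    have hc : G.coeff 0 ≠ 0 := fun h => hGne0 (by rw [hGC, h, map_zero])
    rw [hGC]
    exact (isUnit_iff_ne_zero.mpr hc).map (C : ℚ →+* MvPolynomial (Fin M) ℚ)
  · exfalso
    obtain ⟨m, hm, j, hj⟩ : ∃ m ∈ G.support, ∃ x, m x ≠ 0 := by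
      by_contra hcon
      push_neg at hcon
      exact hcG ((totalDegree_eq_zero_iff _ G).mpr hcon)
    have hdegj : 1 ≤ G.degreeOf j := by
      have h2 : m j ≤ G.degreeOf j := by
        rw [degreeOf_eq_sup]
        exact Finset.le_sup (f := fun m : Fin M →₀ ℕ => m j) hm
      omega
    have hjk : k ≤ (j : ℕ) := by
      by_contra h
      push_neg at h
      have := hdegG j h
      omega
    have hM2 : 2 ≤ M := le_trans hk hkM
    have h0M : 0 < M := by omega
    have h1M : 1 < M := by omega
    have hji0 : j ≠ (⟨0, h0M⟩ : Fin M) := by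
      intro h
      have : (j : ℕ) = 0 := by rw [h]
      omega
    have hji1 : j ≠ (⟨1, h1M⟩ : Fin M) := by
      intro h
      have : (j : ℕ) = 1 := by rw [h]
      omega
    set τ := Equiv.swap (⟨0, h0M⟩ : Fin M) j with hτd
    have hτF : rename (⇑τ) F = F := hsym τ
    have hFGH' : F = rename (⇑τ) G * rename (⇑τ) H := by
      conv_lhs => rw [← hτF, hFGH, map_mul]
    have hEG' : (spec M k (rename (⇑τ) G)).natDegree = (Psi M k (rename (⇑τ) G)).natDegree :=
      factor_natDegree_eq hpos hfne hFGH'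
    have hd0 : (rename (⇑τ) G).degreeOf (⟨0, h0M⟩ : Fin M) = G.degreeOf j := by
      have h := degreeOf_rename_of_injective (τ.injective) j (p := G)
      rwa [show τ j = (⟨0, h0M⟩ : Fin M) from Equiv.swap_apply_right _ _] at h
    have hpos0 : 1 ≤ (spec M k (rename (⇑τ) G)).natDegree := by
      have h2 := degreeOf_le_natDegree_Psi (k := k) (rename (⇑τ) G) (⟨0, h0M⟩ : Fin M)
        (show (0 : ℕ) < k by omega)
      omega
    have hnotunit : ¬ IsUnit (spec M k (rename (⇑τ) G)) :=
      Polynomial.not_isUnit_of_natDegree_pos _ (by omega)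
    have hHu : IsUnit (spec M k (rename (⇑τ) H)) := by
      rcases hirr.isUnit_or_isUnit (by rw [hFGH', map_mul]) with h | h
      · exact absurd h hnotunit
      · exact h
    have hEH' : (spec M k (rename (⇑τ) H)).natDegree = (Psi M k (rename (⇑τ) H)).natDegree :=
      factor_natDegree_eq hpos hfne (by rw [hFGH', mul_comm])
    have hH0 : (Psi M k (rename (⇑τ) H)).natDegree = 0 := by
      rw [← hEH']
      exact Polynomial.natDegree_eq_zero_of_isUnit hHu
    have hHi1 : (rename (⇑τ) H).degreeOf (⟨1, h1M⟩ : Fin M) = 0 := by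
      have := degreeOf_le_natDegree_Psi (k := k) (rename (⇑τ) H) (⟨1, h1M⟩ : Fin M)
        (show (1 : ℕ) < k by omega)
      omega
    have hτi1 : τ (⟨1, h1M⟩ : Fin M) = (⟨1, h1M⟩ : Fin M) :=
      Equiv.swap_apply_of_ne_of_ne (by simp [Fin.ext_iff]) (Ne.symm hji1)
    have hHi1' : H.degreeOf (⟨1, h1M⟩ : Fin M) = 0 := by
      have h := degreeOf_rename_of_injective (τ.injective) (⟨1, h1M⟩ : Fin M) (p := H)
      rw [hτi1] at h
      rw [← h]
      exact hHi1
    have hGi1 : G.degreeOf (⟨1, h1M⟩ : Fin M) = 0 :=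
      hdegG (⟨1, h1M⟩ : Fin M) (show (1 : ℕ) < k by omega)
    have hFi1 : F.degreeOf (⟨1, h1M⟩ : Fin M) = 0 := by
      have := degreeOf_mul_le (⟨1, h1M⟩ : Fin M) G H
      rw [← hFGH] at this
      omega
    have hfdeg : 1 ≤ (spec M k F).natDegree := by
      by_contra h
      push_neg at h
      have h0 : (spec M k F).natDegree = 0 := by omega
      have hC := Polynomial.eq_C_of_natDegree_eq_zero h0
      apply hirr.not_isUnit
      rw [hC]
      exact Polynomial.isUnit_C.mpr (isUnit_iff_ne_zero.mpr
        (fun hc => hfne (by rw [hC, hc, map_zero])))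
    have hPsideg : 1 ≤ (Psi M k F).natDegree := by
      have := natDegree_spec_eq F hpos hfne
      omega
    have hPsiF : Psi M k F ≠ 0 := fun h => hfne (by rw [spec_eq_map, h, Polynomial.map_zero])
    obtain ⟨m', hm'⟩ := MvPolynomial.ne_zero_iff.mp (Polynomial.leadingCoeff_ne_zero.mpr hPsiF)
    rw [Polynomial.leadingCoeff, Psi_coeff] at hm'
    have hw1 : w k m' = (Psi M k F).natDegree := by
      by_contra h
      rw [if_neg h] at hm'
      exact hm' rfl
    have hw2 : F.coeff m' ≠ 0 := by rwa [if_pos hw1] at hm'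
    have hwne : (∑ i : Fin M, if (i : ℕ) < k then m' i else 0) ≠ 0 := by
      show w k m' ≠ 0
      omega
    obtain ⟨i, _, hi⟩ := Finset.exists_ne_zero_of_sum_ne_zero hwne
    have hik : (i : ℕ) < k := by
      by_contra h
      rw [if_neg h] at hi
      exact hi rfl
    rw [if_pos hik] at hi
    have hdegi : 1 ≤ F.degreeOf i := by
      have h2 : m' i ≤ F.degreeOf i := by
        rw [degreeOf_eq_sup]
        exact Finset.le_sup (f := fun m : Fin M →₀ ℕ => m i) (mem_support_iff.mpr hw2)
      omega
    have hsymdeg : F.degreeOf (⟨1, h1M⟩ : Fin M) = F.degreeOf i := by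
      have h := degreeOf_rename_of_injective ((Equiv.swap i (⟨1, h1M⟩ : Fin M)).injective)
        i (p := F)
      rw [hsym (Equiv.swap i (⟨1, h1M⟩ : Fin M)), Equiv.swap_apply_left] at h
      omega
    omega

end Stmt6Aux

/-- Suppose `2 ≤ k ≤ M` and `F ∈ ℚ[x_1,…,x_M]` is a symmetric polynomial with nonnegative
coefficients.  If the specialization of `F` obtained by setting `x_1 = ⋯ = x_k = q` and
`x_{k+1} = ⋯ = x_M = 1` is irreducible in `ℚ[q]`, then `F` is irreducible in
`ℚ[x_1,…,x_M]`. -/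
theorem stmt6 {M k : ℕ} (hk : 2 ≤ k) (hkM : k ≤ M) (F : MvPolynomial (Fin M) ℚ)
    (hsym : F.IsSymmetric) (hpos : ∀ m, 0 ≤ F.coeff m)
    (hirr : Irreducible (MvPolynomial.aeval
      (fun i : Fin M => if (i : ℕ) < k then Polynomial.X else (1 : Polynomial ℚ)) F)) :
    Irreducible F := by
  have hirr' : Irreducible (Stmt6Aux.spec M k F) := hirr
  constructor
  · intro h
    exact hirr'.not_isUnit (h.map (Stmt6Aux.spec M k))
  · intro G H hFGH
    rcases hirr'.isUnit_or_isUnit (by rw [hFGH, map_mul]) with h | h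
    · exact Or.inl (Stmt6Aux.keylemma hk hkM F G H hsym hpos hirr' hFGH h)
    · exact Or.inr (Stmt6Aux.keylemma hk hkM F H G hsym hpos hirr'
        (by rw [hFGH, mul_comm]) h)
end

section
/- Let H be a connected finite simple graph with k+1 vertices, and fix a total ordering e_1 < e_2 < ⋯ < e_m of its edge set E(H). Then Σ_{S ⊆ E(H) such that H_S is connected} (−1)^{|S|−k} equals the number of internal spanning trees of H, where H_S = (V(H), S), and a spanning tree T of H is internal if for every cycle of H all of whose edges except one edge e belong to T, the missing edge e is not the largest edge of that cycle. -/
attribute [local instance 10] Classical.propDecidable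

/-- A spanning tree `S ⊆ E(H)` is *internal* (w.r.t. a total ordering `ord` on edges) if
for every cycle of `H` all of whose edges except one edge `e` belong to `S`, the missing
edge `e` is not the largest edge of that cycle. -/
def IsInternal {V : Type} (H : SimpleGraph V) (ord : LinearOrder (Sym2 V))
    (S : Finset (Sym2 V)) : Prop :=
  ∀ (a : V) (c : H.Walk a a), c.IsCycle →
    ∀ e ∈ c.edges, e ∉ S → (∀ e' ∈ c.edges, e' ≠ e → e' ∈ S) →
      ¬ (∀ e' ∈ c.edges, ord.le e' e)

/-! Run Kruskal's algorithm on a connected spanning subgraph `S` in the given edge order: an edge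
is kept unless its ends are already joined by smaller edges of `S`. The result `T` is a spanning
tree, and `S ↦ (T, S \ T)` is a bijection onto pairs of a spanning tree `T` and a set of edges that
are externally active for `T` (outside `T`, with ends joined by edges of `T` smaller than them).
As `|T| = k`, the signed sum becomes `∑_T ∑_{A ⊆ EA(T)} (-1)^|A|`, whose inner sum is `1` if
`EA(T) = ∅` and `0` otherwise; and `EA(T) = ∅` says exactly that `T` is internal. -/

open SimpleGraph Finset

-- `Sym2` carries the subset order from `SetLike`; every `<` on edges below is the given ordering.
attribute [-instance] Sym2.instPartialOrder

section

variable {V : Type*} {U U' : Finset (Sym2 V)} {e : Sym2 V}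

def SpansEdge (U : Finset (Sym2 V)) (e : Sym2 V) : Prop :=
  ∀ a b : V, e = s(a, b) → (fromEdgeSet (U : Set (Sym2 V))).Reachable a b

namespace SpansEdge

theorem mk_iff {a b : V} :
    SpansEdge U s(a, b) ↔ (fromEdgeSet (U : Set (Sym2 V))).Reachable a b := by
  refine ⟨fun h => h a b rfl, fun h x y hxy => ?_⟩
  obtain ⟨rfl, rfl⟩ | ⟨rfl, rfl⟩ := Sym2.eq_iff.mp hxy
  exacts [h, h.symm]

theorem of_mem (he : e ∈ U) : SpansEdge U e := by
  induction e using Sym2.ind with | _ a b => ?_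
  rw [mk_iff]
  by_cases hab : a = b
  · exact hab ▸ Reachable.refl a
  · exact Adj.reachable ((fromEdgeSet_adj _).mpr ⟨he, hab⟩)

theorem mono (hUU' : U ⊆ U') (h : SpansEdge U e) : SpansEdge U' e := fun a b hab =>
  (h a b hab).mono (fromEdgeSet_mono (coe_subset.mpr hUU'))

end SpansEdge

theorem SimpleGraph.Reachable.of_forall_spansEdge {u v : V}
    (hU : ∀ f ∈ U, SpansEdge U' f) (h : (fromEdgeSet (U : Set (Sym2 V))).Reachable u v) :
    (fromEdgeSet (U' : Set (Sym2 V))).Reachable u v := by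
  obtain ⟨w⟩ := h
  induction w with
  | nil => rfl
  | cons hadj _ ih => exact (SpansEdge.mk_iff.mp (hU _ ((fromEdgeSet_adj _).mp hadj).1)).trans ih

theorem SpansEdge.trans (hU : ∀ f ∈ U, SpansEdge U' f) (h : SpansEdge U e) : SpansEdge U' e :=
  fun a b hab => (h a b hab).of_forall_spansEdge hU

theorem SimpleGraph.Walk.IsCycle.spansEdge {G : SimpleGraph V} {a : V} {c : G.Walk a a}
    (hc : c.IsCycle) {e : Sym2 V} (he : e ∈ c.edges) {U : Finset (Sym2 V)}
    (hU : ∀ f ∈ c.edges, f ≠ e → f ∈ U) : SpansEdge U e := by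
  induction e using Sym2.ind with | _ u v => ?_
  have hsub : ∀ f ∈ c.edges, f ∈ (fromEdgeSet {f | f ∈ c.edges}).edgeSet := fun f hf => by
    rw [edgeSet_fromEdgeSet]
    exact ⟨hf, G.not_isDiag_of_mem_edgeSet (c.edges_subset_edgeSet hf)⟩
  have hreach := (adj_and_reachable_delete_edges_iff_exists_cycle.mpr
    ⟨a, c.transfer _ hsub, hc.transfer hsub, by rwa [Walk.edges_transfer]⟩).2
  rw [deleteEdges_fromEdgeSet] at hreach
  refine SpansEdge.mk_iff.mpr (hreach.mono (fromEdgeSet_mono fun f hf => hU f hf.1 hf.2))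

theorem SimpleGraph.IsAcyclic.not_spansEdge {T U : Finset (Sym2 V)}
    (hT : (fromEdgeSet (T : Set (Sym2 V))).IsAcyclic) {e : Sym2 V} (he : e ∈ T)
    (hd : ¬ e.IsDiag) (hU : U ⊆ T.erase e) : ¬ SpansEdge U e := by
  induction e using Sym2.ind with | _ u v => ?_
  have hbridge := isAcyclic_iff_forall_adj_isBridge.mp hT ((fromEdgeSet_adj _).mpr ⟨he, hd⟩)
  rw [isBridge_iff, deleteEdges_fromEdgeSet] at hbridge
  refine fun h => hbridge ((SpansEdge.mk_iff.mp h).mono (fromEdgeSet_mono fun f hf => ?_))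
  obtain ⟨hne, hfT⟩ := mem_erase.mp (hU hf)
  exact ⟨hfT, hne⟩

theorem exists_isCycle_of_spansEdge {U : Finset (Sym2 V)} {u v : V} (huv : u ≠ v)
    (hU : s(u, v) ∉ U) (h : SpansEdge U s(u, v)) :
    ∃ (a : V) (c : (fromEdgeSet (↑(insert s(u, v) U) : Set (Sym2 V))).Walk a a),
      c.IsCycle ∧ s(u, v) ∈ c.edges := by
  refine adj_and_reachable_delete_edges_iff_exists_cycle.mp
    ⟨(fromEdgeSet_adj _).mpr ⟨by simp, huv⟩, ?_⟩
  rw [deleteEdges_fromEdgeSet]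
  refine (SpansEdge.mk_iff.mp h).mono (fromEdgeSet_mono fun f hf => ⟨by simp [hf], ?_⟩)
  rintro rfl
  exact hU hf

theorem card_add_one_of_isTree [Fintype V] {T : Finset (Sym2 V)} (hd : ∀ e ∈ T, ¬ e.IsDiag)
    (hT : (fromEdgeSet (T : Set (Sym2 V))).IsTree) : #T + 1 = Fintype.card V := by
  have hE : (fromEdgeSet (T : Set (Sym2 V))).edgeFinset = T := by
    ext e
    rw [mem_edgeFinset, edgeSet_fromEdgeSet]
    exact ⟨fun he => he.1, fun he => ⟨he, hd e he⟩⟩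
  rw [← hE]
  exact hT.card_edgeFinset

section Order

variable [LinearOrder (Sym2 V)]

-- Kruskal's algorithm on `S`.
noncomputable def greedyForest (S : Finset (Sym2 V)) : Finset (Sym2 V) :=
  {e ∈ S | ¬ SpansEdge {f ∈ S | f < e} e}

-- Tutte's externally active edges for `T`, among those of `E`.
noncomputable def externallyActive (E T : Finset (Sym2 V)) : Finset (Sym2 V) :=
  {e ∈ E \ T | SpansEdge {f ∈ T | f < e} e}

variable {S T A E : Finset (Sym2 V)}

theorem spansEdge_filter_le [WellFoundedLT (Sym2 V)]
    (h : ∀ e ∈ S \ T, SpansEdge {f ∈ S | f < e} e) {e : Sym2 V} (he : e ∈ S) :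
    SpansEdge {f ∈ T | f ≤ e} e := by
  induction e using WellFoundedLT.induction with | _ e ih => ?_
  by_cases heT : e ∈ T
  · exact .of_mem (mem_filter.mpr ⟨heT, le_rfl⟩)
  refine (h e (mem_sdiff.mpr ⟨he, heT⟩)).trans fun f hf => ?_
  obtain ⟨hfS, hfe⟩ := mem_filter.mp hf
  exact (ih f hfe hfS).mono (monotone_filter_right _ fun g _ hg => hg.trans hfe.le)

theorem greedyForest_subset (S : Finset (Sym2 V)) : greedyForest S ⊆ S := filter_subset _ _

theorem spansEdge_lt_greedyForest [WellFoundedLT (Sym2 V)] {e : Sym2 V}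
    (he : e ∈ S \ greedyForest S) : SpansEdge {f ∈ greedyForest S | f < e} e := by
  obtain ⟨heS, heF⟩ := mem_sdiff.mp he
  have hS : ∀ e ∈ S \ greedyForest S, SpansEdge {f ∈ S | f < e} e := fun e he =>
    of_not_not fun h => (mem_sdiff.mp he).2 (mem_filter.mpr ⟨(mem_sdiff.mp he).1, h⟩)
  exact (spansEdge_filter_le hS heS).mono
    (monotone_filter_right _ fun f hfF hfe => lt_of_le_of_ne hfe (ne_of_mem_of_not_mem hfF heF))

theorem greedyForest_connected [WellFoundedLT (Sym2 V)]
    (hS : (fromEdgeSet (S : Set (Sym2 V))).Connected) :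
    (fromEdgeSet (greedyForest S : Set (Sym2 V))).Connected := by
  have hspan : ∀ e ∈ S, SpansEdge (greedyForest S) e := fun e he => by
    by_cases heF : e ∈ greedyForest S
    · exact .of_mem heF
    · exact (spansEdge_lt_greedyForest (mem_sdiff.mpr ⟨he, heF⟩)).mono (filter_subset _ _)
  rw [connected_iff] at hS ⊢
  exact ⟨fun u v => (hS.1 u v).of_forall_spansEdge hspan, hS.2⟩

theorem greedyForest_isAcyclic (S : Finset (Sym2 V)) :
    (fromEdgeSet (greedyForest S : Set (Sym2 V))).IsAcyclic := by
  intro a c hc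
  have hF : ∀ f ∈ c.edges, f ∈ greedyForest S := fun f hf => by
    have hf' := c.edges_subset_edgeSet hf
    rw [edgeSet_fromEdgeSet] at hf'
    exact hf'.1
  obtain ⟨e, he, hmax⟩ := c.edges.toFinset.exists_max_image id
    (by simpa [Walk.edges_eq_nil] using hc.not_nil)
  rw [List.mem_toFinset] at he
  refine (mem_filter.mp (hF e he)).2 (hc.spansEdge he fun f hf hfe => mem_filter.mpr
    ⟨greedyForest_subset S (hF f hf), lt_of_le_of_ne (hmax f (List.mem_toFinset.mpr hf)) hfe⟩)

theorem sdiff_greedyForest_subset_externallyActive [WellFoundedLT (Sym2 V)] (hSE : S ⊆ E) :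
    S \ greedyForest S ⊆ externallyActive E (greedyForest S) := fun _ he =>
  mem_filter.mpr ⟨sdiff_subset_sdiff hSE subset_rfl he, spansEdge_lt_greedyForest he⟩

theorem disjoint_externallyActive (E T : Finset (Sym2 V)) : Disjoint T (externallyActive E T) :=
  disjoint_of_subset_right (filter_subset _ _) disjoint_sdiff

theorem greedyForest_union_eq [WellFoundedLT (Sym2 V)]
    (hT : (fromEdgeSet (T : Set (Sym2 V))).IsAcyclic) (hd : ∀ e ∈ T, ¬ e.IsDiag)
    (hA : A ⊆ externallyActive E T) : greedyForest (T ∪ A) = T := by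
  have hlt : ∀ e ∈ A, SpansEdge {f ∈ T ∪ A | f < e} e := fun e he =>
    (mem_filter.mp (hA he)).2.mono (filter_subset_filter _ subset_union_left)
  have hle : ∀ e ∈ T ∪ A, SpansEdge {f ∈ T | f ≤ e} e := fun e he =>
    spansEdge_filter_le (fun e he => hlt e (mem_sdiff.mp (union_sdiff_left T A ▸ he)).1) he
  ext e
  refine ⟨fun he => ?_, fun heT => mem_filter.mpr ⟨mem_union_left _ heT, fun h => ?_⟩⟩
  · obtain ⟨heTA, hnot⟩ := mem_filter.mp he
    exact (mem_union.mp heTA).resolve_right fun heA => hnot (hlt e heA)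
  · refine hT.not_spansEdge heT (hd e heT) (U := {f ∈ T | f < e})
      (fun f hf => mem_erase.mpr ⟨(mem_filter.mp hf).2.ne, (mem_filter.mp hf).1⟩)
      (h.trans fun f hf => ?_)
    obtain ⟨hfTA, hfe⟩ := mem_filter.mp hf
    exact (hle f hfTA).mono (monotone_filter_right _ fun g _ hg => hg.trans_lt hfe)

theorem sum_connected_eq_sum_isTree [WellFoundedLT (Sym2 V)] {M : Type*} [AddCommMonoid M]
    [DecidablePred fun S : Finset (Sym2 V) => (fromEdgeSet (↑S : Set (Sym2 V))).Connected]
    [DecidablePred fun T : Finset (Sym2 V) => (fromEdgeSet (↑T : Set (Sym2 V))).IsTree]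
    (E : Finset (Sym2 V)) (hE : ∀ e ∈ E, ¬ e.IsDiag) (g : Finset (Sym2 V) → M) :
    ∑ S ∈ E.powerset.filter
        (fun S : Finset (Sym2 V) => (fromEdgeSet (↑S : Set (Sym2 V))).Connected), g S =
      ∑ T ∈ E.powerset.filter
          (fun T : Finset (Sym2 V) => (fromEdgeSet (↑T : Set (Sym2 V))).IsTree),
        ∑ A ∈ (externallyActive E T).powerset, g (T ∪ A) := by
  rw [sum_sigma']
  refine sum_nbij' (fun S => ⟨greedyForest S, S \ greedyForest S⟩) (fun p => p.1 ∪ p.2)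
    (fun S hS => ?_) (fun p hp => ?_) (fun S _ => ?_) (fun p hp => ?_) (fun S _ => ?_)
  · obtain ⟨hSE, hS⟩ := mem_filter.mp hS
    simp only [mem_sigma, mem_filter, mem_powerset] at hSE ⊢
    exact ⟨⟨(greedyForest_subset S).trans hSE, greedyForest_connected hS,
      greedyForest_isAcyclic S⟩, sdiff_greedyForest_subset_externallyActive hSE⟩
  · simp only [mem_sigma, mem_filter, mem_powerset] at hp ⊢
    obtain ⟨⟨hTE, hT⟩, hA⟩ := hp
    refine ⟨union_subset hTE (hA.trans ((filter_subset _ _).trans sdiff_subset)), ?_⟩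
    exact hT.connected.mono (fromEdgeSet_mono (coe_subset.mpr subset_union_left))
  · exact union_sdiff_of_subset (greedyForest_subset S)
  · simp only [mem_sigma, mem_filter, mem_powerset] at hp
    obtain ⟨⟨hTE, hT⟩, hA⟩ := hp
    have hF : greedyForest (p.1 ∪ p.2) = p.1 :=
      greedyForest_union_eq hT.isAcyclic (fun e he => hE e (hTE he)) hA
    refine Sigma.ext hF (heq_of_eq ?_)
    rw [hF, union_sdiff_cancel_left ((disjoint_externallyActive E p.1).mono_right hA)]
  · rw [union_sdiff_of_subset (greedyForest_subset S)]

end Order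

end

theorem isInternal_iff_externallyActive_eq_empty {V : Type} [ord : LinearOrder (Sym2 V)]
    {H : SimpleGraph V} [Fintype H.edgeSet] {T : Finset (Sym2 V)} (hT : T ⊆ H.edgeFinset) :
    IsInternal H ord T ↔ externallyActive H.edgeFinset T = ∅ := by
  rw [eq_empty_iff_forall_notMem]
  constructor
  · intro hint e he
    obtain ⟨heET, hspan⟩ := mem_filter.mp he
    obtain ⟨heH, heT⟩ := mem_sdiff.mp heET
    induction e using Sym2.ind with | _ u v => ?_
    obtain ⟨a, c, hc, hec⟩ := exists_isCycle_of_spansEdge (mem_edgeFinset.mp heH).ne (by simp)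
      hspan
    have hcE : ∀ f ∈ c.edges, f = s(u, v) ∨ (f ∈ T ∧ f < s(u, v)) := fun f hf => by
      have hf' := c.edges_subset_edgeSet hf
      rw [edgeSet_fromEdgeSet] at hf'
      simpa using hf'.1
    have hsub : ∀ f ∈ c.edges, f ∈ H.edgeSet := fun f hf => by
      rcases hcE f hf with rfl | ⟨hfT, -⟩
      exacts [mem_edgeFinset.mp heH, mem_edgeFinset.mp (hT hfT)]
    refine hint a (c.transfer H hsub) (hc.transfer hsub) _ (by rwa [Walk.edges_transfer]) heT
      (fun f hf hfe => ?_) (fun f hf => ?_) <;> rw [Walk.edges_transfer] at hf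
    · exact ((hcE f hf).resolve_left hfe).1
    · rcases hcE f hf with rfl | ⟨-, hlt⟩
      exacts [le_rfl, hlt.le]
  · intro hEA a c hc e he heT hrest hmax
    refine hEA e (mem_filter.mpr ⟨mem_sdiff.mpr ⟨mem_edgeFinset.mpr (c.edges_subset_edgeSet he),
      heT⟩, hc.spansEdge he fun f hf hfe => mem_filter.mpr ⟨hrest f hf hfe, ?_⟩⟩)
    exact lt_of_le_of_ne (hmax f hf) hfe

theorem stmt18_general {V : Type} [Fintype V] (H : SimpleGraph V) (k : ℕ)
    (hcard : Fintype.card V = k + 1)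
    (ord : LinearOrder (Sym2 V)) :
    ∑ S ∈ H.edgeFinset.powerset.filter
        (fun S : Finset (Sym2 V) => (SimpleGraph.fromEdgeSet (↑S : Set (Sym2 V))).Connected),
      (-1 : ℚ) ^ ((S.card : ℤ) - (k : ℤ)) =
    ((H.edgeFinset.powerset.filter
        (fun S : Finset (Sym2 V) => (SimpleGraph.fromEdgeSet (↑S : Set (Sym2 V))).IsTree ∧
          IsInternal H ord S)).card : ℚ) := by
  let _ := ord
  have hE : ∀ e ∈ H.edgeFinset, ¬ e.IsDiag := fun e he =>
    H.not_isDiag_of_mem_edgeSet (mem_edgeFinset.mp he)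
  rw [sum_connected_eq_sum_isTree _ hE, ← filter_filter, ← sum_boole]
  refine sum_congr rfl fun T hT => ?_
  obtain ⟨hTE, hTtree⟩ := mem_filter.mp hT
  have hTk : #T = k := by
    have := card_add_one_of_isTree (fun e he => hE e (mem_powerset.mp hTE he)) hTtree
    omega
  calc ∑ A ∈ (externallyActive H.edgeFinset T).powerset, (-1 : ℚ) ^ ((#(T ∪ A) : ℤ) - k)
      = ∑ A ∈ (externallyActive H.edgeFinset T).powerset, (-1 : ℚ) ^ #A := by
        refine sum_congr rfl fun A hA => ?_
        rw [card_union_of_disjoint ((disjoint_externallyActive _ T).mono_right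
          (mem_powerset.mp hA)), hTk]
        push_cast
        rw [add_sub_cancel_left, zpow_natCast]
    _ = if IsInternal H ord T then 1 else 0 := by
        rw [isInternal_iff_externallyActive_eq_empty (ord := ord) (mem_powerset.mp hTE)]
        exact_mod_cast sum_powerset_neg_one_pow_card

/-- For a connected graph `H` with `k+1` vertices and a fixed total ordering of its edges,
the signed sum `Σ (−1)^{|S|−k}` over edge subsets `S` with `H_S = (V(H),S)` connected
equals the number of internal spanning trees of `H`. -/
theorem stmt18 {V : Type} [Fintype V] (H : SimpleGraph V) (k : ℕ)
    (hcard : Fintype.card V = k + 1) (hconn : H.Connected)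
    (ord : LinearOrder (Sym2 V)) :
    ∑ S ∈ H.edgeFinset.powerset.filter
        (fun S : Finset (Sym2 V) => (SimpleGraph.fromEdgeSet (↑S : Set (Sym2 V))).Connected),
      (-1 : ℚ) ^ ((S.card : ℤ) - (k : ℤ)) =
    ((H.edgeFinset.powerset.filter
        (fun S : Finset (Sym2 V) => (SimpleGraph.fromEdgeSet (↑S : Set (Sym2 V))).IsTree ∧
          IsInternal H ord S)).card : ℚ) :=
  stmt18_general H k hcard ord
end

section
/- Let G be a finite simple graph with a distinguished root vertex v, and fix N ≥ 1. Define the pointed chromatic polynomial P_{G,v} = Σ_{S ⊆ E(G)} (−1)^{|S|} · p_{λ_v^-(G_S)}(x_1,…,x_N) · z^{λ_v^+(G_S)−1}, an element of ℚ[x_1,…,x_N][z]. Then for every k ≥ 0, the coefficient of (−z)^k in P_{G,v} (that is, (−1)^k times the coefficient of z^k) equals Σ_H f(H)·X_{G∖H}(x_1,…,x_N), where the sum is over all induced subgraphs H of G such that H is connected, H has k+1 vertices, and v ∈ V(H); here f(H) = Σ_{S ⊆ E(H) such that (V(H),S) is connected} (−1)^{|S|−k}, and G∖H is the induced subgraph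 of G on V(G)∖V(H). -/
open MvPolynomial

attribute [local instance 10] Classical.propDecidable

/-- The number of vertices in the connected component `c` of `H`. -/
noncomputable def compCard {V : Type} [Fintype V] (H : SimpleGraph V)
    (c : H.ConnectedComponent) : ℕ :=
  (Finset.univ.filter (fun v => H.connectedComponentMk v = c)).card

/-- `p_{λ_v^-(G_S)}(x_1,…,x_N)`: the product of the power sums `p_{|C|}` over the
connected components `C` of `G_S = (V(G), S)` other than the component of `v`. -/
noncomputable def pLamMinus {V : Type} [Fintype V] (G : SimpleGraph V) (v : V)
    (S : Finset (Sym2 V)) (N : ℕ) : MvPolynomial (Fin N) ℚ :=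
  ∏ c ∈ (Finset.univ :
      Finset (SimpleGraph.fromEdgeSet (↑S : Set (Sym2 V))).ConnectedComponent).erase
      ((SimpleGraph.fromEdgeSet (↑S : Set (Sym2 V))).connectedComponentMk v),
    ∑ i : Fin N, X i ^ compCard (SimpleGraph.fromEdgeSet (↑S : Set (Sym2 V))) c

/-- Pawlowski's pointed chromatic polynomial
`P_{G,v} = Σ_{S ⊆ E(G)} (−1)^{|S|} p_{λ_v^-(G_S)}(x_1,…,x_N) z^{λ_v^+(G_S)−1}`,
as a polynomial in `z` with coefficients in `ℚ[x_1,…,x_N]`. -/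
noncomputable def pointedP {V : Type} [Fintype V] (G : SimpleGraph V) (v : V) (N : ℕ) :
    Polynomial (MvPolynomial (Fin N) ℚ) :=
  ∑ S ∈ G.edgeFinset.powerset,
    (-1 : Polynomial (MvPolynomial (Fin N) ℚ)) ^ S.card *
      (Polynomial.C (pLamMinus G v S N) *
        Polynomial.X ^
          (compCard (SimpleGraph.fromEdgeSet (↑S : Set (Sym2 V)))
            ((SimpleGraph.fromEdgeSet (↑S : Set (Sym2 V))).connectedComponentMk v) - 1))

/-- `f(H) = Σ (−1)^{|S|−k}` over subsets `S` of the edges of `H` (an induced subgraph on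
the vertex set `W`, with `k+1 = |W|`) such that `(V(H), S)` is connected. -/
noncomputable def fH {V : Type} [Fintype V] (G : SimpleGraph V) (W : Finset V) (k : ℕ) : ℤ :=
  ∑ S ∈ (G.induce (↑W : Set V)).edgeFinset.powerset.filter
      (fun S : Finset (Sym2 (↑W : Set V)) =>
        (SimpleGraph.fromEdgeSet (↑S : Set (Sym2 (↑W : Set V)))).Connected),
    (-1 : ℤ) ^ (S.card + k)

/-!
Expanding each power sum `p_m = Σ_i x_i^m` turns `p_{λ_v^-(G_S)}` into a sum over colorings of
the vertices outside the root component `W` of `G_S` that are constant on the edges of `S`.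
The edge sets `S` whose root component is `W` are exactly the unions of a connected spanning
edge set of `G[W]` and an arbitrary edge set of `G ∖ W`, so for fixed `W` the signed sum over
`S` factors as `f(H)` times `Σ_{S₂ ⊆ E(G ∖ W)} (-1)^{|S₂|} Σ_{κ constant on S₂} x^κ`.
By inclusion–exclusion over the monochromatic edges of `κ`, the latter is Stanley's expansion
of `X_{G ∖ W}`.
-/

open SimpleGraph Finset

local notation "ι[" s "]" =>
  Function.Embedding.sym2Map (Function.Embedding.subtype fun x => x ∈ s)

namespace SimpleGraph

variable {V : Type*} {H : SimpleGraph V} {u w : V}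

theorem Reachable.mem_of_adj_closed {s : Set V} (hs : ∀ x y, H.Adj x y → x ∈ s → y ∈ s)
    (h : H.Reachable u w) (hu : u ∈ s) : w ∈ s := by
  rw [reachable_iff_reflTransGen] at h
  induction h with
  | refl => exact hu
  | tail _ hadj ih => exact hs _ _ hadj ih

theorem Reachable.apply_eq_of_adj {β : Type*} {f : V → β}
    (hf : ∀ x y, H.Adj x y → f x = f y) (h : H.Reachable u w) : f u = f w :=
  h.mem_of_adj_closed (s := {x | f u = f x}) (fun _ _ hxy hx => hx.trans (hf _ _ hxy)) rfl

theorem Reachable.induce_of_adj_closed {s : Set V} (hs : ∀ x y, H.Adj x y → x ∈ s → y ∈ s)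
    {a b : s} (h : H.Reachable a b) : (H.induce s).Reachable a b := by
  have hsupp : (H.connectedComponentMk a).supp ⊆ s := fun x hx =>
    (ConnectedComponent.exact hx).symm.mem_of_adj_closed hs a.2
  have hb : (b : V) ∈ (H.connectedComponentMk a).supp := ConnectedComponent.sound h.symm
  have hC := (H.connectedComponentMk a).connected_toSimpleGraph
  exact (hC.preconnected ⟨a, rfl⟩ ⟨b, hb⟩).map (induceHomOfLE H hsupp).toHom

theorem forall_reachable_imp_eq_iff {s : Set V} (hs : ∀ x y, H.Adj x y → x ∈ s → y ∈ s)
    {β : Type*} {f : s → β} :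
    (∀ a b : s, H.Reachable a b → f a = f b) ↔ ∀ a b : s, H.Adj a b → f a = f b :=
  ⟨fun hf a b hab => hf a b hab.reachable, fun hf _ _ hab =>
    (hab.induce_of_adj_closed hs).apply_eq_of_adj fun x y hxy => hf x y hxy⟩

end SimpleGraph

section Components

variable {V : Type} [Fintype V]

noncomputable def componentFinset (H : SimpleGraph V) (v : V) : Finset V :=
  univ.filter fun u => H.connectedComponentMk u = H.connectedComponentMk v

theorem mem_componentFinset_self (H : SimpleGraph V) (v : V) : v ∈ componentFinset H v :=
  Finset.mem_filter.2 ⟨Finset.mem_univ _, rfl⟩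

theorem coe_componentFinset (H : SimpleGraph V) (v : V) :
    (componentFinset H v : Set V) = (H.connectedComponentMk v).supp := by
  ext u
  simp [componentFinset, ConnectedComponent.mem_supp_iff]

theorem componentFinset_eq_iff {H : SimpleGraph V} {v : V} {W : Finset V} (hv : v ∈ W) :
    componentFinset H v = W ↔
      (H.induce (W : Set V)).Connected ∧ ∀ x y, H.Adj x y → x ∈ W → y ∈ W := by
  rw [← Finset.coe_inj, coe_componentFinset]
  constructor
  · intro hW
    refine ⟨hW ▸ (H.connectedComponentMk v).connected_toSimpleGraph, fun x y hxy hx => ?_⟩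
    rw [← Finset.mem_coe, ← hW] at hx ⊢
    exact (H.connectedComponentMk v).mem_supp_of_adj_mem_supp hx hxy
  · rintro ⟨hconn, hclosed⟩
    ext u
    refine ⟨fun hu => (ConnectedComponent.exact hu).symm.mem_of_adj_closed hclosed hv,
      fun hu => ConnectedComponent.sound ?_⟩
    exact (hconn.preconnected ⟨u, hu⟩ ⟨v, hv⟩).map (Embedding.induce _).toHom

end Components

section EdgesIn

variable {V : Type}

noncomputable def edgesIn (S : Finset (Sym2 V)) (s : Set V) : Finset (Sym2 s) :=
  S.preimage (Sym2.map (↑)) (Sym2.map.injective Subtype.val_injective).injOn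

variable {S T : Finset (Sym2 V)} {s t : Set V}

@[simp] theorem mem_edgesIn {e : Sym2 s} : e ∈ edgesIn S s ↔ e.map (↑) ∈ S :=
  Finset.mem_preimage

theorem fromEdgeSet_edgesIn (S : Finset (Sym2 V)) (s : Set V) :
    fromEdgeSet (edgesIn S s : Set (Sym2 s)) = (fromEdgeSet (S : Set (Sym2 V))).induce s := by
  ext a b
  simp [Subtype.ext_iff]

theorem edgesIn_union : edgesIn (S ∪ T) s = edgesIn S s ∪ edgesIn T s := by
  ext e
  simp

theorem edgesIn_map_self (T : Finset (Sym2 s)) :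
    edgesIn (T.map ι[s]) s = T := by
  ext e
  simp [(Sym2.map.injective Subtype.val_injective).eq_iff]

theorem mem_of_mem_map_sym2Map {T : Finset (Sym2 s)} {e : Sym2 V}
    (he : e ∈ T.map ι[s]) {x : V} (hx : x ∈ e) : x ∈ s := by
  obtain ⟨e', -, rfl⟩ := Finset.mem_map.1 he
  obtain ⟨y, -, rfl⟩ := Sym2.mem_map.1 hx
  exact y.2

theorem edgesIn_map_of_disjoint (hst : Disjoint s t) (T : Finset (Sym2 t)) :
    edgesIn (T.map ι[t]) s = ∅ := by
  refine Finset.eq_empty_of_forall_notMem fun e he => ?_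
  induction e with
  | _ a b =>
    exact hst.notMem_of_mem_left a.2
      (mem_of_mem_map_sym2Map (mem_edgesIn.1 he)
        (Sym2.mem_map.2 ⟨a, Sym2.mem_mk_left _ _, rfl⟩))

theorem map_edgesIn (S : Finset (Sym2 V)) (s : Set V) :
    (edgesIn S s).map ι[s] = S.filter fun e => ∀ x ∈ e, x ∈ s := by
  ext e
  refine ⟨fun he => ?_, fun he => ?_⟩
  · obtain ⟨e', he', rfl⟩ := Finset.mem_map.1 he
    exact Finset.mem_filter.2 ⟨mem_edgesIn.1 he', fun x => mem_of_mem_map_sym2Map he⟩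
  · obtain ⟨heS, hs⟩ := Finset.mem_filter.1 he
    induction e with
    | _ a b =>
      exact Finset.mem_map.2
        ⟨s(⟨a, hs a (Sym2.mem_mk_left _ _)⟩, ⟨b, hs b (Sym2.mem_mk_right _ _)⟩),
          mem_edgesIn.2 heS, rfl⟩

theorem forall_mem_edgesIn_isDiag_iff {β : Type*} (S : Finset (Sym2 V)) (s : Set V)
    (κ : s → β) :
    (∀ e ∈ edgesIn S s, (e.map κ).IsDiag) ↔
      ∀ a b : s, (fromEdgeSet (S : Set (Sym2 V))).Adj a b → κ a = κ b := by
  simp only [Sym2.forall, mem_edgesIn, Sym2.map_mk, Sym2.mk_isDiag_iff, fromEdgeSet_adj,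
    Finset.mem_coe]
  exact ⟨fun h a b hab => h a b hab.1, fun h a b hab => by
    by_cases hab' : a = b
    · rw [hab']
    · exact h a b ⟨hab, fun h' => hab' (Subtype.ext h')⟩⟩

theorem disjoint_map_sym2Map {s t : Set V} (hst : Disjoint s t) (T₁ : Finset (Sym2 s))
    (T₂ : Finset (Sym2 t)) :
    Disjoint (T₁.map ι[s]) (T₂.map ι[t]) := by
  refine Finset.disjoint_left.2 fun e h₁ h₂ => ?_
  induction e with
  | _ x y =>
    exact hst.notMem_of_mem_left (mem_of_mem_map_sym2Map h₁ (Sym2.mem_mk_left x y))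
      (mem_of_mem_map_sym2Map h₂ (Sym2.mem_mk_left x y))

theorem edgesIn_subset_edgeFinset_induce {G : SimpleGraph V} [Fintype G.edgeSet]
    [Fintype (G.induce s).edgeSet] (hS : S ⊆ G.edgeFinset) :
    edgesIn S s ⊆ (G.induce s).edgeFinset := by
  intro e he
  induction e with
  | _ a b => simpa using hS (mem_edgesIn.1 he)

theorem map_subset_edgeFinset {G : SimpleGraph V} [Fintype G.edgeSet]
    [Fintype (G.induce s).edgeSet] {T : Finset (Sym2 s)} (hT : T ⊆ (G.induce s).edgeFinset) :
    T.map ι[s] ⊆ G.edgeFinset := by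
  intro e he
  obtain ⟨e', he', rfl⟩ := Finset.mem_map.1 he
  induction e' with
  | _ a b => simpa using hT he'

end EdgesIn

section Decomposition

variable {V : Type} [Fintype V] {S : Finset (Sym2 V)} {v : V} {W : Finset V}

theorem map_edgesIn_union_map_edgesIn_compl
    (hW : componentFinset (fromEdgeSet (S : Set (Sym2 V))) v = W) :
    (edgesIn S W).map ι[(W : Set V)] ∪ (edgesIn S {x | x ∉ W}).map ι[{x | x ∉ W}] = S := by
  have hclosed := ((componentFinset_eq_iff (hW ▸ mem_componentFinset_self _ v)).1 hW).2
  ext e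
  rw [Finset.mem_union, map_edgesIn, map_edgesIn]
  simp only [Finset.mem_filter, ← and_or_left, and_iff_left_iff_imp]
  intro he
  induction e with
  | _ x y =>
    by_cases hxy : x = y
    · subst hxy
      by_cases hx : x ∈ W <;> simp [hx]
    · have hadj : (fromEdgeSet (S : Set (Sym2 V))).Adj x y := ⟨he, hxy⟩
      by_cases hx : x ∈ W
      · simp [hx, hclosed x y hadj hx]
      · have hy : y ∉ W := fun hy => hx (hclosed y x hadj.symm hy)
        simp [hx, hy]

theorem sum_filter_componentFinset_eq {M : Type*} [AddCommMonoid M] (G : SimpleGraph V)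
    (hv : v ∈ W) (f : Finset (Sym2 V) → M) :
    ∑ S ∈ G.edgeFinset.powerset.filter
        (fun S : Finset (Sym2 V) => componentFinset (fromEdgeSet (S : Set (Sym2 V))) v = W), f S =
      ∑ S₁ ∈ (G.induce (W : Set V)).edgeFinset.powerset.filter
          (fun S₁ : Finset (Sym2 (W : Set V)) =>
            (fromEdgeSet (S₁ : Set (Sym2 (W : Set V)))).Connected),
        ∑ S₂ ∈ (G.induce {x | x ∉ W}).edgeFinset.powerset,
          f (S₁.map ι[(W : Set V)] ∪ S₂.map ι[{x | x ∉ W}]) := by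
  have hdisj : Disjoint (W : Set V) {x | x ∉ W} := Set.disjoint_left.2 fun _ hx hx' => hx' hx
  rw [← Finset.sum_product']
  symm
  refine Finset.sum_nbij' (fun p => p.1.map ι[_] ∪ p.2.map ι[_])
    (fun S => (edgesIn S W, edgesIn S {x | x ∉ W})) ?_ ?_ ?_ ?_ fun _ _ => rfl
  · rintro ⟨S₁, S₂⟩ h
    simp only [Finset.mem_product, Finset.mem_filter, Finset.mem_powerset] at h ⊢
    obtain ⟨⟨hS₁, hconn⟩, hS₂⟩ := h
    refine ⟨Finset.union_subset (map_subset_edgeFinset hS₁) (map_subset_edgeFinset hS₂),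
      (componentFinset_eq_iff hv).2 ⟨?_, fun x y hxy hx => ?_⟩⟩
    · rwa [← fromEdgeSet_edgesIn, edgesIn_union, edgesIn_map_self,
        edgesIn_map_of_disjoint hdisj, Finset.union_empty]
    · rcases Finset.mem_union.1 hxy.1 with h | h
      · exact mem_of_mem_map_sym2Map h (Sym2.mem_mk_right x y)
      · exact absurd hx (mem_of_mem_map_sym2Map h (Sym2.mem_mk_left x y))
  · intro S h
    simp only [Finset.mem_product, Finset.mem_filter, Finset.mem_powerset] at h ⊢
    have hconn := ((componentFinset_eq_iff hv).1 h.2).1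
    rw [← fromEdgeSet_edgesIn] at hconn
    exact ⟨⟨edgesIn_subset_edgeFinset_induce h.1, hconn⟩,
      edgesIn_subset_edgeFinset_induce h.1⟩
  · rintro ⟨S₁, S₂⟩ -
    simp only [edgesIn_union, edgesIn_map_self, edgesIn_map_of_disjoint hdisj,
      edgesIn_map_of_disjoint hdisj.symm, Finset.union_empty, Finset.empty_union]
  · intro S h
    exact map_edgesIn_union_map_edgesIn_compl (Finset.mem_filter.1 h).2

end Decomposition

section Stanley

theorem sum_powerset_neg_one_pow_of_forall {β R : Type*} [Ring R] (E : Finset β)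
    (P : β → Prop) [DecidablePred P] :
    ∑ S ∈ E.powerset.filter (fun S => ∀ e ∈ S, P e), (-1 : R) ^ S.card =
      if ∀ e ∈ E, ¬ P e then 1 else 0 := by
  classical
  have hfilter : E.powerset.filter (fun S => ∀ e ∈ S, P e) = (E.filter P).powerset := by
    ext S
    simp only [Finset.mem_filter, Finset.mem_powerset, Finset.subset_iff]
    grind
  have hempty : E.filter P = ∅ ↔ ∀ e ∈ E, ¬ P e := Finset.filter_eq_empty_iff
  have h := congrArg (Int.cast : ℤ → R) (Finset.sum_powerset_neg_one_pow_card (x := E.filter P))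
  push_cast at h
  rw [hfilter, h]
  exact if_congr hempty rfl rfl

variable {α : Type} [Fintype α] [DecidableEq α]

theorem sum_powerset_edgeFinset_eq_XG (H : SimpleGraph α) [Fintype H.edgeSet]
    (N : ℕ) :
    ∑ S ∈ H.edgeFinset.powerset, (-1 : MvPolynomial (Fin N) ℚ) ^ S.card *
        ∑ κ ∈ univ.filter (fun κ : α → Fin N => ∀ e ∈ S, (e.map κ).IsDiag),
          ∏ a, X (κ a) =
      XG H N := by
  have hproper (κ : α → Fin N) :
      (∀ e ∈ H.edgeFinset, ¬ (e.map κ).IsDiag) ↔ ∀ u w, H.Adj u w → κ u ≠ κ w := by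
    simp [Sym2.forall]
  simp_rw [Finset.mul_sum, Finset.sum_filter]
  rw [Finset.sum_comm, XG, properColorings, Finset.sum_filter]
  -- the two `univ`s differ only in their `Fintype` instances
  refine Finset.sum_congr (by congr!) fun κ _ => ?_
  rw [← Finset.sum_filter, ← Finset.sum_mul, ← if_congr (hproper κ) rfl rfl, ← boole_mul]
  congr 1
  convert sum_powerset_neg_one_pow_of_forall H.edgeFinset fun e => (e.map κ).IsDiag

end Stanley

section PowerSums

variable {α τ σ : Type*} [Fintype α] [Fintype τ] [DecidableEq τ] [Fintype σ]

theorem prod_sum_pow_card_fiber {R : Type*} [CommSemiring R] (p : α → τ) (x : σ → R) :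
    ∏ i, ∑ c, x c ^ (univ.filter fun a => p a = i).card =
      ∑ g : τ → σ, ∏ a, x (g (p a)) := by
  rw [Fintype.prod_sum]
  refine Finset.sum_congr rfl fun g _ => ?_
  rw [← Finset.prod_fiberwise' univ p (fun i => x (g i))]
  simp_rw [Finset.prod_const]

theorem sum_comp_eq_sum_filter {M : Type*} [AddCommMonoid M] [DecidableEq α] [DecidableEq σ]
    {p : α → τ} (hp : Function.Surjective p) (F : (α → σ) → M) :
    ∑ g : τ → σ, F (g ∘ p) =
      ∑ κ ∈ univ.filter (fun κ : α → σ => ∀ a b, p a = p b → κ a = κ b), F κ := by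
  refine Finset.sum_nbij' (· ∘ p) (· ∘ Function.surjInv hp) ?_ (fun _ _ => Finset.mem_univ _)
    ?_ ?_ fun _ _ => rfl
  · intro g _
    exact Finset.mem_filter.2 ⟨Finset.mem_univ _, fun a b hab => congrArg g hab⟩
  · intro g _
    funext i
    simp [Function.surjInv_eq hp]
  · intro κ hκ
    funext a
    exact (Finset.mem_filter.1 hκ).2 _ _ (Function.surjInv_eq hp (p a))

end PowerSums

section PLamMinus

variable {V : Type} [Fintype V]

theorem prod_sum_pow_compCard_eq_sum (H : SimpleGraph V) [Fintype H.ConnectedComponent]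
    [DecidableEq H.ConnectedComponent] (v : V) (N : ℕ) :
    ∏ c ∈ univ.erase (H.connectedComponentMk v),
        ∑ i : Fin N, (X i : MvPolynomial (Fin N) ℚ) ^ compCard H c =
      ∑ κ ∈ univ.filter (fun κ : {x | x ∉ componentFinset H v} → Fin N =>
          ∀ a b : {x | x ∉ componentFinset H v}, H.Adj a b → κ a = κ b),
        ∏ a, X (κ a) := by
  have hA (x : V) :
      x ∉ componentFinset H v ↔ H.connectedComponentMk x ≠ H.connectedComponentMk v := by
    simp [componentFinset]
  have hclosed := ((componentFinset_eq_iff (mem_componentFinset_self H v)).1 rfl).2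
  let p : {x | x ∉ componentFinset H v} →
      {c : H.ConnectedComponent // c ≠ H.connectedComponentMk v} := fun a =>
    ⟨H.connectedComponentMk a, (hA a).1 a.2⟩
  have hp : Function.Surjective p := fun c =>
    ⟨⟨c.1.out, (hA _).2 (ne_of_eq_of_ne c.1.out_eq c.2)⟩, Subtype.ext c.1.out_eq⟩
  have hcard (c : {c : H.ConnectedComponent // c ≠ H.connectedComponentMk v}) :
      (univ.filter fun a => p a = c).card = compCard H c := by
    refine Finset.card_bij (fun a _ => a.1) ?_ (fun _ _ _ _ h => Subtype.ext h) ?_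
    · intro a ha
      simp only [Finset.mem_filter, Finset.mem_univ, true_and] at ha ⊢
      exact congrArg Subtype.val ha
    · intro x hx
      simp only [Finset.mem_filter, Finset.mem_univ, true_and] at hx ⊢
      exact ⟨⟨x, (hA x).2 (hx ▸ c.2)⟩, Subtype.ext hx, rfl⟩
  have hconst (κ : {x | x ∉ componentFinset H v} → Fin N) :
      (∀ a b, p a = p b → κ a = κ b) ↔
        ∀ a b : {x | x ∉ componentFinset H v}, H.Adj a b → κ a = κ b := by
    rw [← forall_reachable_imp_eq_iff (s := {x | x ∉ componentFinset H v})
      fun x y hxy (hx : x ∉ componentFinset H v) hy => hx (hclosed y x hxy.symm hy)]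
    simp only [p, Subtype.mk.injEq, ConnectedComponent.eq]
  rw [Finset.prod_subtype (p := (· ≠ H.connectedComponentMk v)) _ fun c => by simp]
  simp_rw [← hcard]
  rw [prod_sum_pow_card_fiber p X]
  rw [Finset.filter_congr fun κ _ => (hconst κ).symm]
  exact sum_comp_eq_sum_filter hp fun κ => ∏ a, (X (κ a) : MvPolynomial (Fin N) ℚ)

theorem pLamMinus_eq_sum_colorings (G : SimpleGraph V) {v : V} {S : Finset (Sym2 V)}
    {W : Finset V} (hW : componentFinset (fromEdgeSet (S : Set (Sym2 V))) v = W) (N : ℕ) :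
    pLamMinus G v S N =
      ∑ κ ∈ univ.filter (fun κ : {x | x ∉ W} → Fin N =>
          ∀ e ∈ edgesIn S {x | x ∉ W}, (e.map κ).IsDiag),
        ∏ a, X (κ a) := by
  subst hW
  rw [pLamMinus, prod_sum_pow_compCard_eq_sum]
  simp_rw [forall_mem_edgesIn_isDiag_iff]
  congr

end PLamMinus

section Expansion

variable {V : Type} [Fintype V]

theorem sum_filter_componentFinset_eq_smul_XG (G : SimpleGraph V) {v : V} {W : Finset V}
    (hv : v ∈ W) (N k : ℕ) :
    ∑ S ∈ G.edgeFinset.powerset.filter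
        (fun S : Finset (Sym2 V) => componentFinset (fromEdgeSet (S : Set (Sym2 V))) v = W),
        (-1 : MvPolynomial (Fin N) ℚ) ^ k * ((-1) ^ S.card * pLamMinus G v S N) =
      fH G W k • XG (G.induce {x : V | x ∉ W}) N := by
  have hdisj : Disjoint (W : Set V) {x | x ∉ W} := Set.disjoint_left.2 fun _ hx hx' => hx' hx
  rw [Finset.sum_congr rfl fun S hS => by
      rw [pLamMinus_eq_sum_colorings G (Finset.mem_filter.1 hS).2],
    sum_filter_componentFinset_eq G hv, fH, Finset.sum_smul]
  refine Finset.sum_congr rfl fun S₁ _ => ?_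
  rw [← sum_powerset_edgeFinset_eq_XG, Finset.smul_sum]
  refine Finset.sum_congr rfl fun S₂ _ => ?_
  rw [Finset.card_union_of_disjoint (disjoint_map_sym2Map hdisj S₁ S₂), Finset.card_map,
    Finset.card_map, edgesIn_union, edgesIn_map_self, edgesIn_map_of_disjoint hdisj.symm,
    Finset.empty_union, zsmul_eq_mul]
  push_cast
  ring

theorem coeff_pointedP (G : SimpleGraph V) (v : V) (N k : ℕ) :
    (pointedP G v N).coeff k =
      ∑ S ∈ G.edgeFinset.powerset.filter (fun S : Finset (Sym2 V) =>
          (componentFinset (fromEdgeSet (S : Set (Sym2 V))) v).card = k + 1),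
        (-1) ^ S.card * pLamMinus G v S N := by
  rw [pointedP, Polynomial.finsetSum_coeff, Finset.sum_filter]
  refine Finset.sum_congr rfl fun S _ => ?_
  have hpos : 0 < (componentFinset (fromEdgeSet (S : Set (Sym2 V))) v).card :=
    Finset.card_pos.2 ⟨v, mem_componentFinset_self _ v⟩
  have hcomp : compCard (fromEdgeSet (S : Set (Sym2 V)))
      ((fromEdgeSet (S : Set (Sym2 V))).connectedComponentMk v) =
      (componentFinset (fromEdgeSet (S : Set (Sym2 V))) v).card := rfl
  rw [hcomp, ← Polynomial.C_1, ← Polynomial.C_neg, ← Polynomial.C_pow, ← mul_assoc,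
    ← Polynomial.C_mul, Polynomial.coeff_C_mul_X_pow]
  exact if_congr (by omega) rfl rfl

theorem sum_filter_card_componentFinset_eq {M : Type*} [AddCommMonoid M] (G : SimpleGraph V)
    (v : V) (k : ℕ) (f : Finset (Sym2 V) → M) :
    ∑ S ∈ G.edgeFinset.powerset.filter (fun S : Finset (Sym2 V) =>
        (componentFinset (fromEdgeSet (S : Set (Sym2 V))) v).card = k + 1), f S =
      ∑ W ∈ (Finset.univ.powersetCard (k + 1)).filter
          (fun W : Finset V => v ∈ W ∧ (G.induce (↑W : Set V)).Connected),
        ∑ S ∈ G.edgeFinset.powerset.filter (fun S : Finset (Sym2 V) =>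
          componentFinset (fromEdgeSet (S : Set (Sym2 V))) v = W), f S := by
  rw [← Finset.sum_fiberwise_of_maps_to
    (g := fun S : Finset (Sym2 V) => componentFinset (fromEdgeSet (S : Set (Sym2 V))) v)]
  · refine Finset.sum_congr rfl fun W hW => ?_
    have hcard : W.card = k + 1 := (Finset.mem_powersetCard.1 (Finset.mem_filter.1 hW).1).2
    rw [Finset.filter_filter]
    refine Finset.sum_congr (Finset.filter_congr fun S _ => ?_) fun _ _ => rfl
    exact and_iff_right_of_imp fun h => h ▸ hcard
  · intro S hS
    obtain ⟨hSE, hcard⟩ := Finset.mem_filter.1 hS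
    have hle : fromEdgeSet (S : Set (Sym2 V)) ≤ G :=
      (fromEdgeSet_le G).2 fun e he => G.mem_edgeFinset.1 (Finset.mem_powerset.1 hSE he.1)
    refine Finset.mem_filter.2 ⟨Finset.mem_powersetCard.2 ⟨Finset.subset_univ _, hcard⟩,
      mem_componentFinset_self _ v, ?_⟩
    exact ((componentFinset_eq_iff (mem_componentFinset_self _ v)).1 rfl).1.mono
      (comap_monotone _ hle)

end Expansion

theorem stmt19_general {V : Type} [Fintype V] (G : SimpleGraph V) (v : V) (N : ℕ)
    (k : ℕ) :
    (-1 : MvPolynomial (Fin N) ℚ) ^ k * (pointedP G v N).coeff k =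
      ∑ W ∈ (Finset.univ.powersetCard (k + 1)).filter
          (fun W : Finset V => v ∈ W ∧ (G.induce (↑W : Set V)).Connected),
        (fH G W k) • XG (G.induce {x : V | x ∉ W}) N := by
  rw [coeff_pointedP, Finset.mul_sum, sum_filter_card_componentFinset_eq]
  exact Finset.sum_congr rfl fun W hW =>
    sum_filter_componentFinset_eq_smul_XG G (Finset.mem_filter.1 hW).2.1 N k

/-- Combinatorial interpretation of the monomial expansion of the pointed chromatic
polynomial: for each `k ≥ 0`, the coefficient of `(−z)^k` in `P_{G,v}` equals
`Σ_H f(H)·X_{G∖H}(x_1,…,x_N)`, summed over all connected induced subgraphs `H` of `G`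
with `k+1` vertices containing `v`. -/
theorem stmt19 {V : Type} [Fintype V] (G : SimpleGraph V) (v : V) (N : ℕ) (hN : 1 ≤ N)
    (k : ℕ) :
    (-1 : MvPolynomial (Fin N) ℚ) ^ k * (pointedP G v N).coeff k =
      ∑ W ∈ (Finset.univ.powersetCard (k + 1)).filter
          (fun W : Finset V => v ∈ W ∧ (G.induce (↑W : Set V)).Connected),
        (fH G W k) • XG (G.induce {x : V | x ∉ W}) N :=
  stmt19_general G v N k
end
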